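/- arXiv:1704.05160 — 3 statements merged into one kernel-verified Lean document; each statement's English description precedes it below -/
import Mathlib

section
/- Let N be a combinatorial cylindrical network over a field K of characteristic zero, and let u, v ∈ V. Define f : ℕ → K by f(ℓ) = Ñ((u,0),(v,ℓ)), the sum of the weights of all directed paths in the universal cover Ñ from (u,0) to (v,ℓ). Then f satisfies a linear recurrence with characteristic polynomial Q_N(t), i.e. the recurrence holds for all but finitely many values of ℓ. -/
/-- A combinatorial cylindrical network. -/
structure CylNetwork (K : Type) [Field K] where
  V : Type
  E : Type
  [fintV : Fintype V]
  [decV : DecidableEq V]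
  [fintE : Fintype E]
  [decE : DecidableEq E]
  src : E → V
  tgt : E → V
  shift : E → ℤ
  wt : E → K

attribute [instance] CylNetwork.fintV CylNetwork.decV CylNetwork.fintE CylNetwork.decE

namespace CylNetwork

variable {K : Type} [Field K]

/-- `IsWalk N u v es` : the list of edges `es` is a directed walk from `u` to `v` in `N`. -/
def IsWalk (N : CylNetwork K) : N.V → N.V → List N.E → Prop
  | u, v, [] => u = v
  | u, v, e :: es => N.src e = u ∧ IsWalk N (N.tgt e) v es

/-- The total shift of a list of edges. -/
def totalShift (N : CylNetwork K) (es : List N.E) : ℤ := (es.map N.shift).sum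

/-- The weight of a walk: the product of the weights of its edges. -/
def wtList (N : CylNetwork K) (es : List N.E) : K := (es.map N.wt).prod

/-- Every directed cycle has positive total shift. -/
def PosCycles (N : CylNetwork K) : Prop :=
  ∀ (v : N.V) (es : List N.E), es ≠ [] → N.IsWalk v v es → 0 < N.totalShift es

/-- `pathSum N u v ℓ` = Ñ((u,0),(v,ℓ)): the sum of weights of all directed paths in the
universal cover Ñ from `(u,0)` to `(v,ℓ)`. -/
noncomputable def pathSum (N : CylNetwork K) (u v : N.V) (ℓ : ℤ) : K :=
  ∑ᶠ es ∈ {es : List N.E | N.IsWalk u v es ∧ N.totalShift es = ℓ}, N.wtList es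

/-- An edge set `S` is closed if `src` and `tgt` are injective on it with equal images;
equivalently, `S` is a disjoint union of simple cycles. -/
def IsClosedSet (N : CylNetwork K) (S : Finset N.E) : Prop :=
  Set.InjOn N.src (S : Set N.E) ∧ Set.InjOn N.tgt (S : Set N.E) ∧
    N.src '' (S : Set N.E) = N.tgt '' (S : Set N.E)

/-- A simple cycle: a nonempty closed edge set which is a single cycle. -/
def IsSimpleCycle (N : CylNetwork K) (S : Finset N.E) : Prop :=
  N.IsClosedSet S ∧ S.Nonempty ∧ ∀ S' ⊆ S, N.IsClosedSet S' → S' = ∅ ∨ S' = S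

/-- The vertex set of a cycle. -/
def cycVerts (N : CylNetwork K) (S : Finset N.E) : Finset N.V := S.image N.src

/-- An `r`-cycle (with `r = 𝒞.card`): a collection of pairwise vertex-disjoint
simple cycles. -/
def IsCycleColl (N : CylNetwork K) (𝒞 : Finset (Finset N.E)) : Prop :=
  (∀ S ∈ 𝒞, N.IsSimpleCycle S) ∧
  (𝒞 : Set (Finset N.E)).Pairwise fun S S' => Disjoint (N.cycVerts S) (N.cycVerts S')

/-- The weight of a collection of cycles. -/
def collWt (N : CylNetwork K) (𝒞 : Finset (Finset N.E)) : K := ∏ S ∈ 𝒞, ∏ e ∈ S, N.wt e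

/-- The winding number of a collection of cycles: its total shift. -/
def collWind (N : CylNetwork K) (𝒞 : Finset (Finset N.E)) : ℤ := ∑ S ∈ 𝒞, ∑ e ∈ S, N.shift e

/-- The set of winding numbers of all cycle collections of `N`. -/
def windSet (N : CylNetwork K) : Set ℤ :=
  {w : ℤ | ∃ 𝒞 : Finset (Finset N.E), N.IsCycleColl 𝒞 ∧ N.collWind 𝒞 = w}

/-- The polynomial `Q_N(t) = Σ_{r ≥ 0} (−1)^{d−r} Σ_{C an r-cycle} t^{d−wind(C)} wt(C)`
(here `(−1)^{d−r}` is written as `(−1)^{d+r}`, which is equal to it whenever `r ≤ d`). -/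
noncomputable def QN (N : CylNetwork K) (d : ℕ) : Polynomial K :=
  ∑ᶠ 𝒞 ∈ {𝒞 : Finset (Finset N.E) | N.IsCycleColl 𝒞},
    Polynomial.C ((-1 : K) ^ (d + 𝒞.card) * N.collWt 𝒞) *
      Polynomial.X ^ ((d : ℤ) - N.collWind 𝒞).toNat

end CylNetwork

/-- `f : ℕ → R` satisfies a linear recurrence with characteristic polynomial `Q`, i.e.
`Σ_k Q.coeff k · f(n+k) = 0` for all but finitely many `n`. -/
def SatisfiesLinRec {R : Type} [CommRing R] (f : ℕ → R) (Q : Polynomial R) : Prop :=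
  ∀ᶠ n in Filter.cofinite, ∑ k ∈ Finset.range (Q.natDegree + 1), Q.coeff k * f (n + k) = 0

namespace CylNetwork

variable {K : Type} [Field K] (N : CylNetwork K)

/-- A walk starting at `u`, with no condition on the endpoint. -/
def Ok : N.V → List N.E → Prop
  | _, [] => True
  | u, e :: es => N.src e = u ∧ Ok (N.tgt e) es

/-- The endpoint of a walk starting at `u`. -/
def dst : N.V → List N.E → N.V
  | u, [] => u
  | _, e :: es => dst (N.tgt e) es

variable {N}

@[simp] lemma ok_nil (u : N.V) : N.Ok u [] := trivial

@[simp] lemma ok_cons {u : N.V} {e : N.E} {es : List N.E} :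
    N.Ok u (e :: es) ↔ N.src e = u ∧ N.Ok (N.tgt e) es := Iff.rfl

@[simp] lemma dst_nil (u : N.V) : N.dst u [] = u := rfl

@[simp] lemma dst_cons (u : N.V) (e : N.E) (es : List N.E) :
    N.dst u (e :: es) = N.dst (N.tgt e) es := rfl

lemma isWalk_iff {u v : N.V} {es : List N.E} :
    N.IsWalk u v es ↔ N.Ok u es ∧ N.dst u es = v := by
  induction es generalizing u with
  | nil => simp [IsWalk, eq_comm]
  | cons e es ih => simp [IsWalk, ih, and_assoc]

lemma dst_append (u : N.V) (a b : List N.E) :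
    N.dst u (a ++ b) = N.dst (N.dst u a) b := by
  induction a generalizing u with
  | nil => rfl
  | cons e es ih => simp [ih]

lemma ok_append {u : N.V} {a b : List N.E} :
    N.Ok u (a ++ b) ↔ N.Ok u a ∧ N.Ok (N.dst u a) b := by
  induction a generalizing u with
  | nil => simp
  | cons e es ih => simp [ih, and_assoc]

@[simp] lemma totalShift_nil : N.totalShift [] = 0 := rfl

lemma totalShift_cons (e : N.E) (es : List N.E) :
    N.totalShift (e :: es) = N.shift e + N.totalShift es := by
  simp [totalShift]

lemma totalShift_append (a b : List N.E) :
    N.totalShift (a ++ b) = N.totalShift a + N.totalShift b := by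
  simp [totalShift]

@[simp] lemma wtList_nil : N.wtList [] = 1 := rfl

lemma wtList_append (a b : List N.E) :
    N.wtList (a ++ b) = N.wtList a * N.wtList b := by
  simp [wtList]

lemma dst_take_succ (u : N.V) (p : List N.E) (k : ℕ) (hk : k < p.length) :
    N.dst u (p.take (k + 1)) = N.tgt (p.get ⟨k, hk⟩) := by
  rw [← List.take_concat_get hk, List.concat_eq_append, dst_append]
  rfl

lemma src_get {u : N.V} {p : List N.E} (h : N.Ok u p) (k : ℕ) (hk : k < p.length) :
    N.src (p.get ⟨k, hk⟩) = N.dst u (p.take k) := by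
  induction p generalizing u k with
  | nil => simp at hk
  | cons e es ih =>
    rcases k with _ | k
    · simpa using h.1
    · simpa using ih h.2 k (by simpa using hk)

lemma ok_take {u : N.V} {p : List N.E} (h : N.Ok u p) (k : ℕ) : N.Ok u (p.take k) := by
  have := (ok_append (u := u) (a := p.take k) (b := p.drop k))
  rw [List.take_append_drop] at this
  exact (this.mp h).1

lemma ok_drop {u : N.V} {p : List N.E} (h : N.Ok u p) (k : ℕ) :
    N.Ok (N.dst u (p.take k)) (p.drop k) := by
  have := (ok_append (u := u) (a := p.take k) (b := p.drop k))
  rw [List.take_append_drop] at this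
  exact (this.mp h).2

lemma dst_take_drop (u : N.V) (p : List N.E) (k : ℕ) :
    N.dst (N.dst u (p.take k)) (p.drop k) = N.dst u p := by
  rw [← dst_append, List.take_append_drop]

end CylNetwork
namespace CylNetwork

variable {K : Type} [Field K] {N : CylNetwork K}

variable (N) in
/-- The `k`-th vertex visited by the walk `p` starting at `u`. -/
def vtx (u : N.V) (p : List N.E) (k : ℕ) : N.V := N.dst u (p.take k)

lemma vtx_of_length_le (u : N.V) (p : List N.E) {k : ℕ} (h : p.length ≤ k) :
    N.vtx u p k = N.dst u p := by
  simp [vtx, List.take_of_length_le h]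

/-- Pigeonhole: two of the first `card V + 1` vertices of a walk coincide. -/
lemma exists_vtx_eq (u : N.V) (p : List N.E) :
    ∃ i j, i < j ∧ j ≤ Fintype.card N.V ∧ N.vtx u p i = N.vtx u p j := by
  classical
  obtain ⟨i, hi, j, hj, hne, heq⟩ :=
    Finset.exists_ne_map_eq_of_card_lt_of_maps_to
      (s := Finset.range (Fintype.card N.V + 1)) (t := (Finset.univ : Finset N.V))
      (by simp) (fun k _ => Finset.mem_univ (N.vtx u p k))
  simp only [Finset.mem_range, Nat.lt_succ_iff] at hi hj
  rcases lt_or_gt_of_ne hne with h | h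
  · exact ⟨i, j, h, hj, heq⟩
  · exact ⟨j, i, h, hi, heq.symm⟩

variable (N) in
/-- A bound on the absolute values of the shifts. -/
def shiftBd : ℕ := Finset.univ.sup fun e => (N.shift e).natAbs

lemma shift_le_shiftBd (e : N.E) : (N.shift e).natAbs ≤ N.shiftBd := by
  unfold shiftBd; exact Finset.le_sup (f := fun e => (N.shift e).natAbs) (Finset.mem_univ e)

lemma totalShift_le (p : List N.E) : N.totalShift p ≤ (N.shiftBd : ℤ) * p.length := by
  induction p with
  | nil => simp
  | cons e es ih =>
    have h1 : N.shift e ≤ (N.shiftBd : ℤ) := by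
      have := shift_le_shiftBd (N := N) e; omega
    rw [totalShift_cons]
    simp only [List.length_cons]
    push_cast
    linarith [ih]

lemma neg_totalShift_le (p : List N.E) : -((N.shiftBd : ℤ) * p.length) ≤ N.totalShift p := by
  induction p with
  | nil => simp
  | cons e es ih =>
    have h1 : -(N.shiftBd : ℤ) ≤ N.shift e := by
      have := shift_le_shiftBd (N := N) e; omega
    rw [totalShift_cons]
    simp only [List.length_cons]
    push_cast
    linarith [ih]

/-- Decomposition of a walk at indices `i < j` with equal vertices:
the middle part is a closed walk, and it can be excised. -/
lemma walk_excise {u v : N.V} {p : List N.E} (hw : N.IsWalk u v p) {i j : ℕ}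
    (hij : i < j) (hjl : j ≤ p.length) (hv : N.vtx u p i = N.vtx u p j) :
    N.IsWalk (N.vtx u p i) (N.vtx u p i) ((p.take j).drop i) ∧
      N.IsWalk u v (p.take i ++ p.drop j) ∧
      ((p.take j).drop i) ≠ [] ∧
      ((p.take j).drop i).length = j - i ∧
      (p.take i ++ p.drop j).length + (j - i) = p.length ∧
      N.totalShift p = N.totalShift (p.take i ++ p.drop j)
        + N.totalShift ((p.take j).drop i) ∧
      N.wtList p = N.wtList (p.take i ++ p.drop j) * N.wtList ((p.take j).drop i) ∧
      p = p.take i ++ ((p.take j).drop i) ++ p.drop j := by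
  classical
  rw [isWalk_iff] at hw
  obtain ⟨hok, hdst⟩ := hw
  have hsplit : p.take i ++ ((p.take j).drop i) = p.take j := by
    conv_rhs => rw [← List.take_append_drop i (p.take j)]
    rw [List.take_take, min_eq_left hij.le]
  have hp : p = p.take i ++ ((p.take j).drop i) ++ p.drop j := by
    rw [hsplit, List.take_append_drop]
  have hokj : N.Ok u (p.take j) := ok_take hok j
  have hokb : N.Ok (N.vtx u p i) ((p.take j).drop i) := by
    have := ok_drop hokj i
    rwa [List.take_take, min_eq_left hij.le] at this
  have hdstb : N.dst (N.vtx u p i) ((p.take j).drop i) = N.vtx u p j := by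
    have := dst_take_drop u (p.take j) i
    rwa [List.take_take, min_eq_left hij.le] at this
  have hlenb : ((p.take j).drop i).length = j - i := by
    simp [List.length_drop, List.length_take]
    omega
  have hbne : ((p.take j).drop i) ≠ [] := by
    intro h
    rw [h] at hlenb
    simp at hlenb
    omega
  refine ⟨?_, ?_, hbne, hlenb, ?_, ?_, ?_, hp⟩
  · rw [isWalk_iff]
    exact ⟨hokb, by rw [hdstb, hv]⟩
  · rw [isWalk_iff, ok_append]
    have hoka : N.Ok u (p.take i) := ok_take hok i
    have hdsta : N.dst u (p.take i) = N.vtx u p i := rfl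
    have hokc : N.Ok (N.vtx u p j) (p.drop j) := ok_drop hok j
    have hdstc : N.dst (N.vtx u p j) (p.drop j) = v := by
      rw [← hdst]; exact dst_take_drop u p j
    refine ⟨⟨hoka, ?_⟩, ?_⟩
    · rw [hdsta, hv]; exact hokc
    · rw [dst_append, hdsta, hv]; exact hdstc
  · have : p.length = i + (j - i) + (p.length - j) := by omega
    rw [List.length_append, List.length_take, List.length_drop]
    omega
  · conv_lhs => rw [hp]
    simp only [totalShift_append]
    ring
  · conv_lhs => rw [hp]
    simp only [wtList_append]
    ring

/-- Length of a walk is linearly bounded by its total shift. -/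
lemma length_le_of_posCycles (hpos : N.PosCycles) :
    ∀ (p : List N.E) (u v : N.V), N.IsWalk u v p →
      (p.length : ℤ) ≤ (Fintype.card N.V) * N.totalShift p +
        (Fintype.card N.V) * ((N.shiftBd + 1) * Fintype.card N.V) := by
  set cV := Fintype.card N.V with hcV
  set B : ℤ := (cV : ℤ) * ((N.shiftBd + 1) * cV) with hB
  suffices H : ∀ (m : ℕ) (p : List N.E) (u v : N.V), p.length ≤ m → N.IsWalk u v p →
      (p.length : ℤ) ≤ (cV : ℤ) * N.totalShift p + B by
    exact fun p u v h => H p.length p u v le_rfl h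
  intro m
  induction m with
  | zero =>
    intro p u v hl hw
    interval_cases h : p.length
    · have hpnil : p = [] := List.length_eq_zero_iff.mp h
      subst hpnil
      simp only [totalShift_nil, mul_zero, zero_add, List.length_nil, Nat.cast_zero]
      positivity
  | succ m ih =>
    intro p u v hl hw
    have hcVpos : 0 < cV := Fintype.card_pos_iff.mpr ⟨u⟩
    by_cases hc : p.length < cV
    · have h1 : -((N.shiftBd : ℤ) * p.length) ≤ N.totalShift p := neg_totalShift_le p
      have h2 : (cV:ℤ) * (-((N.shiftBd : ℤ) * p.length)) ≤ (cV:ℤ) * N.totalShift p :=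
        mul_le_mul_of_nonneg_left h1 (by positivity)
      have h3 : (p.length : ℤ) < cV := by exact_mod_cast hc
      have h4 : (N.shiftBd : ℤ) ≥ 0 := by positivity
      have h5 : (cV:ℤ) * ((N.shiftBd:ℤ) * p.length) ≤ (cV:ℤ) * ((N.shiftBd:ℤ) * cV) := by
        have h5a : (N.shiftBd:ℤ) * p.length ≤ (N.shiftBd:ℤ) * cV :=
          mul_le_mul_of_nonneg_left h3.le h4
        exact mul_le_mul_of_nonneg_left h5a (by positivity)
      have h6 : (cV:ℤ) ≤ (cV:ℤ) * cV :=
        le_mul_of_one_le_left (by positivity) (by exact_mod_cast hcVpos)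
      have hBexp : B = (cV:ℤ) * ((N.shiftBd:ℤ) * cV) + (cV:ℤ) * cV := by rw [hB]; ring
      have h2' : -((cV:ℤ) * ((N.shiftBd:ℤ) * (p.length:ℤ))) ≤ (cV:ℤ) * N.totalShift p := by
        rw [← mul_neg] at h2 ⊢; linarith [h2]
      linarith
    · push_neg at hc
      obtain ⟨i, j, hij, hjc, hv⟩ := exists_vtx_eq u p
      have hjl : j ≤ p.length := le_trans hjc hc
      obtain ⟨hwb, hwac, hbne, hblen, hlen, hts, -, -⟩ := walk_excise hw hij hjl hv
      have hb1 : 1 ≤ N.totalShift ((p.take j).drop i) := hpos _ _ hbne hwb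
      have hih := ih (p.take i ++ p.drop j) u v (by omega) hwac
      have h5 : (cV:ℤ) * (N.totalShift (p.take i ++ p.drop j) + 1) ≤ (cV:ℤ) * N.totalShift p := by
        apply mul_le_mul_of_nonneg_left _ (by positivity)
        omega
      have h6 : ((p.take i ++ p.drop j).length : ℤ) + (j - i : ℕ) = p.length := by
        exact_mod_cast congrArg (Nat.cast : ℕ → ℤ) hlen
      have h7 : ((j - i : ℕ) : ℤ) ≤ cV := by
        have : j - i ≤ cV := by omega
        exact_mod_cast this
      have h8 : (cV:ℤ) * (N.totalShift (p.take i ++ p.drop j) + 1)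
          = (cV:ℤ) * N.totalShift (p.take i ++ p.drop j) + cV := by ring
      linarith
/-- Walks with bounded total shift form a finite set. -/
lemma finite_walks_shift_le (hpos : N.PosCycles) (u v : N.V) (b : ℤ) :
    {p : List N.E | N.IsWalk u v p ∧ N.totalShift p ≤ b}.Finite := by
  have key := length_le_of_posCycles hpos
  apply Set.Finite.subset
    (List.finite_length_le N.E ((Fintype.card N.V) * b +
      (Fintype.card N.V) * ((N.shiftBd + 1) * Fintype.card N.V)).toNat)
  rintro p ⟨hw, hs⟩
  have h1 := key p u v hw
  have h2 : (Fintype.card N.V : ℤ) * N.totalShift p ≤ (Fintype.card N.V : ℤ) * b :=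
    mul_le_mul_of_nonneg_left hs (by positivity)
  simp only [Set.mem_setOf_eq]
  omega

lemma finite_walks_shift_eq (hpos : N.PosCycles) (u v : N.V) (b : ℤ) :
    {p : List N.E | N.IsWalk u v p ∧ N.totalShift p = b}.Finite :=
  (finite_walks_shift_le hpos u v b).subset (by rintro p ⟨hw, hs⟩; exact ⟨hw, hs.le⟩)

end CylNetwork
namespace CylNetwork

variable {K : Type} [Field K] {N : CylNetwork K}

variable (N) in
/-- A concrete simple cycle: a nonempty closed walk with no repeated edges,
on which `src` is injective. -/
def IsCyc (w : N.V) (b : List N.E) : Prop :=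
  N.IsWalk w w b ∧ b ≠ [] ∧ b.Nodup ∧ Set.InjOn N.src (b.toFinset : Set N.E)

lemma vtx_take {u : N.V} {p : List N.E} {k j : ℕ} (hkj : k ≤ j) :
    N.vtx u (p.take j) k = N.vtx u p k := by
  simp only [vtx, List.take_take, min_eq_left hkj]

/-- Vertices along a middle segment. -/
lemma vtx_seg (u : N.V) (p : List N.E) {i j : ℕ} (k : ℕ) (hk : i + k ≤ j) :
    N.vtx (N.vtx u p i) ((p.take j).drop i) k = N.vtx u p (i + k) := by
  have h2 : ((p.take j).drop i).take k = (p.drop i).take k := by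
    rw [List.drop_take, List.take_take, min_eq_left (by omega)]
  simp only [vtx, h2, List.take_add, dst_append]

/-- Vertices along a concatenation with a middle part. -/
lemma vtx_append (u : N.V) (a b : List N.E) (k : ℕ) :
    N.vtx u (a ++ b) k = if k ≤ a.length then N.vtx u a k
      else N.vtx (N.dst u a) b (k - a.length) := by
  split_ifs with h
  · simp only [vtx, List.take_append]
    rw [show k - a.length = 0 by omega]
    simp [List.take_take, min_eq_left h]
  · simp only [vtx, List.take_append, dst_append]
    rw [List.take_of_length_le (by omega)]

lemma vtx_src_get {u : N.V} {p : List N.E} (hok : N.Ok u p) {k : ℕ} (hk : k < p.length) :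
    N.vtx u p k = N.src (p.get ⟨k, hk⟩) := (src_get hok k hk).symm

lemma vtx_succ_tgt {u : N.V} {p : List N.E} {k : ℕ} (hk : k < p.length) :
    N.vtx u p (k + 1) = N.tgt (p.get ⟨k, hk⟩) := dst_take_succ u p k hk

/-- adjacency: source of the `(k+1)`-st edge is the target of the `k`-th. -/
lemma src_succ_eq_tgt {u : N.V} {p : List N.E} (hok : N.Ok u p) {k : ℕ}
    (hk : k + 1 < p.length) :
    N.src (p.get ⟨k + 1, hk⟩) = N.tgt (p.get ⟨k, by omega⟩) := by
  rw [← vtx_src_get hok hk, vtx_succ_tgt (by omega)]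

lemma vtx_length {w : N.V} {b : List N.E} (hw : N.IsWalk w w b) :
    N.vtx w b b.length = w := by
  rw [isWalk_iff] at hw
  simp [vtx, hw.2]

/-- Target of the `k`-th edge of a closed walk, cyclically. -/
lemma tgt_get_mod {w : N.V} {b : List N.E} (hw : N.IsWalk w w b) {k : ℕ}
    (hk : k < b.length) :
    N.tgt (b.get ⟨k, hk⟩) = N.vtx w b ((k + 1) % b.length) := by
  rcases Nat.lt_or_ge (k+1) b.length with h | h
  · rw [Nat.mod_eq_of_lt h, vtx_succ_tgt hk]
  · have hk1 : k + 1 = b.length := by omega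
    rw [hk1, Nat.mod_self, ← vtx_succ_tgt hk, hk1, vtx_length hw]
    simp [vtx]

/-- In an `IsCyc`, the first `b.length` vertices are pairwise distinct. -/
lemma vtx_injOn_of_isCyc {w : N.V} {b : List N.E} (hc : N.IsCyc w b) :
    ∀ i j, i < b.length → j < b.length → N.vtx w b i = N.vtx w b j → i = j := by
  obtain ⟨hw, hne, hnd, hinj⟩ := hc
  have hok : N.Ok w b := (isWalk_iff.mp hw).1
  intro i j hi hj hv
  rw [vtx_src_get hok hi, vtx_src_get hok hj] at hv
  have h1 : b.get ⟨i, hi⟩ = b.get ⟨j, hj⟩ :=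
    hinj (by simp [List.mem_toFinset.mpr (List.get_mem _ _)])
         (by simp [List.mem_toFinset.mpr (List.get_mem _ _)]) hv
  have h2 := List.nodup_iff_injective_get.mp hnd h1
  exact congrArg Fin.val h2

/-- Conversely, distinct vertices give an `IsCyc`. -/
lemma isCyc_of_vtx_inj {w : N.V} {b : List N.E} (hw : N.IsWalk w w b) (hne : b ≠ [])
    (hinj : ∀ i j, i < b.length → j < b.length → N.vtx w b i = N.vtx w b j → i = j) :
    N.IsCyc w b := by
  have hok : N.Ok w b := (isWalk_iff.mp hw).1
  have hget : ∀ (i j : Fin b.length), N.src (b.get i) = N.src (b.get j) → i = j := by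
    intro i j h
    rw [← vtx_src_get hok i.isLt, ← vtx_src_get hok j.isLt] at h
    exact Fin.ext (hinj i j i.isLt j.isLt h)
  refine ⟨hw, hne, List.nodup_iff_injective_get.mpr ?_, ?_⟩
  · intro i j h
    exact hget i j (congrArg N.src h)
  · intro e₁ h₁ e₂ h₂ h
    simp only [Finset.coe_sort_coe, List.coe_toFinset, Set.mem_setOf_eq] at h₁ h₂
    obtain ⟨i, hi⟩ := List.mem_iff_get.mp h₁
    obtain ⟨j, hj⟩ := List.mem_iff_get.mp h₂
    rw [← hi, ← hj] at h ⊢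
    rw [hget i j h]

/-- The vertex set of the edge finset of a walk. -/
lemma cycVerts_toFinset {w : N.V} {b : List N.E} (hok : N.Ok w b) :
    N.cycVerts b.toFinset = (Finset.range b.length).image (N.vtx w b) := by
  ext x
  simp only [cycVerts, Finset.mem_image, List.mem_toFinset, Finset.mem_range]
  constructor
  · rintro ⟨e, he, rfl⟩
    obtain ⟨i, hi⟩ := List.mem_iff_get.mp he
    exact ⟨i, i.isLt, by rw [vtx_src_get hok i.isLt, hi]⟩
  · rintro ⟨i, hi, rfl⟩
    exact ⟨b.get ⟨i, hi⟩, List.get_mem _ _, (vtx_src_get hok hi).symm⟩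

lemma mod_pred_succ {n i : ℕ} (hi : i < n) (hn : 0 < n) :
    ((i + n - 1) % n + 1) % n = i := by
  rcases Nat.eq_zero_or_pos i with h0 | h0
  · subst h0
    have h1 : 0 + n - 1 = n - 1 := by omega
    have h2 : n - 1 < n := by omega
    rw [h1, Nat.mod_eq_of_lt h2, Nat.sub_add_cancel hn, Nat.mod_self]
  · have h1 : i + n - 1 = (i - 1) + n := by omega
    have h2 : i - 1 < n := by omega
    have h3 : i - 1 + 1 = i := by omega
    rw [h1, Nat.add_mod_right, Nat.mod_eq_of_lt h2, h3, Nat.mod_eq_of_lt hi]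

lemma mod_succ_inj {n i j : ℕ} (hi : i < n) (hj : j < n)
    (h : (i + 1) % n = (j + 1) % n) : i = j := by
  rcases Nat.lt_or_ge (i + 1) n with h1 | h1 <;>
    rcases Nat.lt_or_ge (j + 1) n with h2 | h2
  · rw [Nat.mod_eq_of_lt h1, Nat.mod_eq_of_lt h2] at h; omega
  · have hj1 : j + 1 = n := by omega
    rw [Nat.mod_eq_of_lt h1, hj1, Nat.mod_self] at h; omega
  · have hi1 : i + 1 = n := by omega
    rw [Nat.mod_eq_of_lt h2, hi1, Nat.mod_self] at h; omega
  · omega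

/-- An `IsCyc` yields a closed edge set. -/
lemma isClosedSet_of_isCyc {w : N.V} {b : List N.E} (hc : N.IsCyc w b) :
    N.IsClosedSet b.toFinset := by
  obtain ⟨hw, hne, hnd, hinj⟩ := hc
  have hok : N.Ok w b := (isWalk_iff.mp hw).1
  have hlen : 0 < b.length := List.length_pos_iff.mpr hne
  have hvinj := vtx_injOn_of_isCyc ⟨hw, hne, hnd, hinj⟩
  refine ⟨hinj, ?_, ?_⟩
  · -- tgt injective
    intro e₁ h₁ e₂ h₂ h
    simp only [Finset.coe_sort_coe, List.coe_toFinset, Set.mem_setOf_eq] at h₁ h₂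
    obtain ⟨i, hi⟩ := List.mem_iff_get.mp h₁
    obtain ⟨j, hj⟩ := List.mem_iff_get.mp h₂
    rw [← hi, ← hj] at h ⊢
    rw [tgt_get_mod hw i.isLt, tgt_get_mod hw j.isLt] at h
    have h1 := hvinj _ _ (Nat.mod_lt _ hlen) (Nat.mod_lt _ hlen) h
    have h2 : (i : ℕ) = (j : ℕ) := mod_succ_inj i.isLt j.isLt h1
    congr 1
    exact Fin.ext h2
  · -- images equal
    ext x
    simp only [Set.mem_image, Finset.coe_sort_coe, List.coe_toFinset, Set.mem_setOf_eq]
    constructor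
    · rintro ⟨e, he, rfl⟩
      obtain ⟨i, hi⟩ := List.mem_iff_get.mp he
      have hklt : ((i : ℕ) + b.length - 1) % b.length < b.length := Nat.mod_lt _ hlen
      have hmod := mod_pred_succ i.isLt hlen
      refine ⟨b.get ⟨_, hklt⟩, List.get_mem _ _, ?_⟩
      rw [tgt_get_mod hw hklt, ← hi, ← vtx_src_get hok i.isLt]
      rw [hmod]
    · rintro ⟨e, he, rfl⟩
      obtain ⟨i, hi⟩ := List.mem_iff_get.mp he
      have hklt : ((i : ℕ) + 1) % b.length < b.length := Nat.mod_lt _ hlen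
      refine ⟨b.get ⟨_, hklt⟩, List.get_mem _ _, ?_⟩
      rw [← hi, tgt_get_mod hw i.isLt, ← vtx_src_get hok hklt]

end CylNetwork
namespace CylNetwork

variable {K : Type} [Field K] {N : CylNetwork K}

lemma isCyc_rotate {w : N.V} {b : List N.E} (hc : N.IsCyc w b) (k : ℕ) :
    N.IsCyc (N.vtx w b k) (b.drop k ++ b.take k) ∧
      (b.drop k ++ b.take k).toFinset = b.toFinset := by
  obtain ⟨hw, hne, hnd, hinj⟩ := hc
  rw [isWalk_iff] at hw
  obtain ⟨hok, hdst⟩ := hw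
  have hts : (b.drop k ++ b.take k).toFinset = b.toFinset := by
    rw [List.toFinset_append, Finset.union_comm, ← List.toFinset_append,
      List.take_append_drop]
  have hperm : (b.drop k ++ b.take k).Perm b := by
    refine List.perm_append_comm.trans ?_
    rw [List.take_append_drop]
  refine ⟨⟨?_, ?_, hperm.symm.nodup hnd, hts ▸ hinj⟩, hts⟩
  · rw [isWalk_iff, ok_append]
    have h1 : N.Ok (N.vtx w b k) (b.drop k) := ok_drop hok k
    have h2 : N.dst (N.vtx w b k) (b.drop k) = w := by
      rw [vtx, dst_take_drop, hdst]
    refine ⟨⟨h1, ?_⟩, ?_⟩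
    · rw [h2]; exact ok_take hok k
    · rw [dst_append, h2]; rfl
  · intro h
    apply hne
    have := congrArg List.length h
    simp only [List.length_append, List.length_drop, List.length_take,
      List.length_nil] at this
    have : b.length = 0 := by omega
    exact List.length_eq_zero_iff.mp this

lemma subset_isCyc {w : N.V} {b : List N.E} (hc : N.IsCyc w b) {S' : Finset N.E}
    (hsub : S' ⊆ b.toFinset) (hS' : N.IsClosedSet S') (hne' : S'.Nonempty) :
    S' = b.toFinset := by
  obtain ⟨e₀, he₀⟩ := hne'
  have he₀b : e₀ ∈ b := List.mem_toFinset.mp (hsub he₀)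
  obtain ⟨k₀, hk₀⟩ := List.mem_iff_get.mp he₀b
  obtain ⟨hc', hts⟩ := isCyc_rotate hc k₀
  set b' := b.drop k₀ ++ b.take k₀ with hb'
  have hok' : N.Ok (N.vtx w b k₀) b' := (isWalk_iff.mp hc'.1).1
  have hlen' : b'.length = b.length := by
    simp only [hb', List.length_append, List.length_drop, List.length_take]
    omega
  have h0lt : 0 < b'.length := by
    rw [hlen']
    exact List.length_pos_iff.mpr (fun h => hc.2.1 h)
  have hget0 : b'.get ⟨0, h0lt⟩ = e₀ := by
    have hk₀lt := k₀.isLt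
    have hdlen : 0 < (b.drop (k₀ : ℕ)).length := by rw [List.length_drop]; omega
    rw [← hk₀]
    show (b.drop (k₀ : ℕ) ++ b.take (k₀ : ℕ))[(0 : ℕ)]'h0lt = b.get k₀
    rw [List.getElem_append_left hdlen]
    have : (b.drop (k₀ : ℕ))[(0 : ℕ)]'hdlen = b[(k₀ : ℕ) + 0]'(by omega) :=
      List.getElem_drop
    simpa using this
  have claim : ∀ k (hk : k < b'.length), b'.get ⟨k, hk⟩ ∈ S' := by
    intro k
    induction k with
    | zero => intro hk; rw [hget0]; exact he₀
    | succ k ih =>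
      intro hk
      have hkk : k < b'.length := by omega
      have h1 : b'.get ⟨k, hkk⟩ ∈ S' := ih hkk
      have h2 : N.tgt (b'.get ⟨k, hkk⟩) ∈ N.src '' (S' : Set N.E) := by
        rw [hS'.2.2]
        exact ⟨_, h1, rfl⟩
      obtain ⟨e', he', hsrc⟩ := h2
      have h3 : N.src (b'.get ⟨k + 1, hk⟩) = N.tgt (b'.get ⟨k, hkk⟩) :=
        src_succ_eq_tgt hok' hk
      have h4 : e' = b'.get ⟨k + 1, hk⟩ := by
        apply hc'.2.2.2
        · exact (hts ▸ hsub) he'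
        · simp only [Finset.coe_sort_coe, List.coe_toFinset, Set.mem_setOf_eq]
          exact List.get_mem _ _
        · rw [hsrc, h3]
      rwa [h4] at he'
  apply Finset.Subset.antisymm hsub
  intro e he
  have heb' : e ∈ b' := List.mem_toFinset.mp (hts ▸ he)
  obtain ⟨k, hk⟩ := List.mem_iff_get.mp heb'
  rw [← hk]
  exact claim k k.isLt

lemma isSimpleCycle_of_isCyc {w : N.V} {b : List N.E} (hc : N.IsCyc w b) :
    N.IsSimpleCycle b.toFinset := by
  refine ⟨isClosedSet_of_isCyc hc, ?_, ?_⟩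
  · rcases b with _ | ⟨e, t⟩
    · exact absurd rfl hc.2.1
    · exact ⟨e, by simp⟩
  · intro S' hsub hS'
    rcases S'.eq_empty_or_nonempty with h | h
    · exact Or.inl h
    · exact Or.inr (subset_isCyc hc hsub hS' h)

lemma cyc_eq_of_toFinset_eq :
    ∀ (b₁ : List N.E) (S : Finset N.E), Set.InjOn N.src (S : Set N.E) →
      ∀ (b₂ : List N.E) (w : N.V), N.Ok w b₁ → N.Ok w b₂ → b₁.Nodup → b₂.Nodup →
      b₁.toFinset = S → b₂.toFinset = S → b₁ = b₂ := by
  intro b₁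
  induction b₁ with
  | nil =>
    intro S hinj b₂ w _ _ _ _ h₁ h₂
    rw [List.toFinset_nil] at h₁
    rcases b₂ with _ | ⟨e₂, t₂⟩
    · rfl
    · exfalso
      have he : e₂ ∈ (e₂ :: t₂).toFinset := by simp
      rw [h₂, ← h₁] at he
      simp at he
  | cons e t ih =>
    intro S hinj b₂ w hok₁ hok₂ hnd₁ hnd₂ h₁ h₂
    rcases b₂ with _ | ⟨e₂, t₂⟩
    · exfalso
      have he : e ∈ (e :: t).toFinset := by simp
      rw [h₁, ← h₂] at he
      simp at he
    · have heS : e ∈ S := by rw [← h₁]; simp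
      have he₂S : e₂ ∈ S := by rw [← h₂]; simp
      have hee : e = e₂ := by
        apply hinj heS he₂S
        rw [hok₁.1, hok₂.1]
      subst hee
      obtain ⟨hnotmem₁, hnd₁'⟩ := List.nodup_cons.mp hnd₁
      obtain ⟨hnotmem₂, hnd₂'⟩ := List.nodup_cons.mp hnd₂
      have ht₁ : t.toFinset = S.erase e := by
        rw [← h₁, List.toFinset_cons, Finset.erase_insert (by simpa using hnotmem₁)]
      have ht₂ : t₂.toFinset = S.erase e := by
        rw [← h₂, List.toFinset_cons, Finset.erase_insert (by simpa using hnotmem₂)]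
      have hinj' : Set.InjOn N.src ((S.erase e : Finset N.E) : Set N.E) :=
        hinj.mono (by simp only [Finset.coe_subset]; exact Finset.erase_subset e S)
      rw [ih (S.erase e) hinj' t₂ (N.tgt e) hok₁.2 hok₂.2 hnd₁' hnd₂' ht₁ ht₂]

lemma exists_long_walk {S : Finset N.E} (hS : N.IsClosedSet S) :
    ∀ (n : ℕ) (x : N.V), x ∈ N.src '' (S : Set N.E) →
      ∃ es : List N.E, N.Ok x es ∧ es.length = n ∧ ∀ e ∈ es, e ∈ S := by
  intro n
  induction n with
  | zero => exact fun x _ => ⟨[], trivial, rfl, by simp⟩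
  | succ n ih =>
    intro x hx
    obtain ⟨e, he, hsrc⟩ := hx
    have htgt : N.tgt e ∈ N.src '' (S : Set N.E) := by
      rw [hS.2.2]
      exact ⟨e, he, rfl⟩
    obtain ⟨es, hok, hlen, hmem⟩ := ih (N.tgt e) htgt
    refine ⟨e :: es, ⟨hsrc, hok⟩, by simp [hlen], ?_⟩
    intro e' he'
    rcases List.mem_cons.mp he' with h | h
    · rwa [h]
    · exact hmem e' h

lemma exists_isCyc_subset {S : Finset N.E} (hS : N.IsClosedSet S) (hne : S.Nonempty) :
    ∃ (w : N.V) (b : List N.E), N.IsCyc w b ∧ b.toFinset ⊆ S := by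
  classical
  obtain ⟨e₀, he₀⟩ := hne
  have hx : N.src e₀ ∈ N.src '' (S : Set N.E) := ⟨e₀, by simpa using he₀, rfl⟩
  obtain ⟨p, hok, hlen, hmem⟩ := exists_long_walk hS (Fintype.card N.V) (N.src e₀) hx
  set x := N.src e₀
  have hw : N.IsWalk x (N.dst x p) p := isWalk_iff.mpr ⟨hok, rfl⟩
  have hEx : ∃ j, ∃ i, i < j ∧ N.vtx x p i = N.vtx x p j := by
    obtain ⟨i, j, hij, hjc, hv⟩ := exists_vtx_eq x p
    exact ⟨j, i, hij, hv⟩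
  set j := Nat.find hEx with hj
  obtain ⟨i, hij, hv⟩ := Nat.find_spec hEx
  have hjle : j ≤ Fintype.card N.V := by
    obtain ⟨i', j', hij', hjc', hv'⟩ := exists_vtx_eq x p
    exact le_trans (Nat.find_min' hEx ⟨i', hij', hv'⟩) hjc'
  have hjl : j ≤ p.length := by omega
  obtain ⟨hwb, -, hbne, hblen, -, -, -, -⟩ := walk_excise hw hij hjl hv
  refine ⟨N.vtx x p i, (p.take j).drop i, ?_, ?_⟩
  · apply isCyc_of_vtx_inj hwb hbne
    intro k₁ k₂ hk₁ hk₂ hveq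
    rw [hblen] at hk₁ hk₂
    rw [vtx_seg x p k₁ (by omega), vtx_seg x p k₂ (by omega)] at hveq
    rcases lt_trichotomy k₁ k₂ with h | h | h
    · exfalso
      exact Nat.find_min hEx (show i + k₂ < j by omega) ⟨i + k₁, by omega, hveq⟩
    · exact h
    · exfalso
      exact Nat.find_min hEx (show i + k₁ < j by omega) ⟨i + k₂, by omega, hveq.symm⟩
  · intro e he
    have : e ∈ p := List.take_subset j p (List.drop_subset i _ (List.mem_toFinset.mp he))
    exact hmem e this

lemma exists_isCyc_eq {S : Finset N.E} (hS : N.IsSimpleCycle S) {w : N.V}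
    (hw : w ∈ N.cycVerts S) : ∃ b, N.IsCyc w b ∧ b.toFinset = S := by
  obtain ⟨w₀, b₀, hc₀, hsub⟩ := exists_isCyc_subset hS.1 hS.2.1
  have hts : b₀.toFinset = S := by
    rcases hS.2.2 _ hsub (isClosedSet_of_isCyc hc₀) with h | h
    · exfalso
      rcases b₀ with _ | ⟨e, t⟩
      · exact hc₀.2.1 rfl
      · have : e ∈ (e :: t).toFinset := by simp
        rw [h] at this
        simp at this
    · exact h
  obtain ⟨e, heS, hsrc⟩ := Finset.mem_image.mp hw
  have heb : e ∈ b₀ := List.mem_toFinset.mp (hts ▸ heS)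
  obtain ⟨k, hk⟩ := List.mem_iff_get.mp heb
  have hok₀ : N.Ok w₀ b₀ := (isWalk_iff.mp hc₀.1).1
  have hwv : N.vtx w₀ b₀ k = w := by
    rw [vtx_src_get hok₀ k.isLt, hk, hsrc]
  obtain ⟨hc', hts'⟩ := isCyc_rotate hc₀ k
  exact ⟨b₀.drop k ++ b₀.take k, hwv ▸ hc', hts'.trans hts⟩

lemma sum_shift_toFinset {b : List N.E} (hnd : b.Nodup) :
    ∑ e ∈ b.toFinset, N.shift e = N.totalShift b :=
  List.sum_toFinset _ hnd

lemma prod_wt_toFinset {b : List N.E} (hnd : b.Nodup) :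
    ∏ e ∈ b.toFinset, N.wt e = N.wtList b :=
  List.prod_toFinset _ hnd

lemma simpleCycle_shift_pos (hpos : N.PosCycles) {S : Finset N.E}
    (hS : N.IsSimpleCycle S) : 0 < ∑ e ∈ S, N.shift e := by
  have hvne : (N.cycVerts S).Nonempty := hS.2.1.image N.src
  obtain ⟨w, hw⟩ := hvne
  obtain ⟨b, hc, hts⟩ := exists_isCyc_eq hS hw
  rw [← hts, sum_shift_toFinset hc.2.2.1]
  exact hpos w b hc.2.1 hc.1

lemma simpleCycle_card_le (hS : N.IsSimpleCycle (S : Finset N.E)) : True := trivial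

end CylNetwork
namespace CylNetwork

variable {K : Type} [Field K] {N : CylNetwork K}

variable (N) in
/-- All vertices used by a cycle collection. -/
def allVerts (𝒞 : Finset (Finset N.E)) : Finset N.V := 𝒞.biUnion N.cycVerts

lemma mem_allVerts {𝒞 : Finset (Finset N.E)} {x : N.V} :
    x ∈ N.allVerts 𝒞 ↔ ∃ S ∈ 𝒞, x ∈ N.cycVerts S := Finset.mem_biUnion

lemma isCycleColl_empty : N.IsCycleColl ∅ := by
  constructor
  · intro S hS; simp at hS
  · simp

lemma isCycleColl_erase {𝒞 : Finset (Finset N.E)} (h : N.IsCycleColl 𝒞)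
    (S : Finset N.E) : N.IsCycleColl (𝒞.erase S) := by
  refine ⟨fun S' hS' => h.1 S' (Finset.erase_subset _ _ hS'), ?_⟩
  exact Set.Pairwise.mono (by simp only [Finset.coe_subset]; exact Finset.erase_subset _ _) h.2

lemma isCycleColl_insert {𝒞 : Finset (Finset N.E)} (h : N.IsCycleColl 𝒞)
    {S : Finset N.E} (hS : N.IsSimpleCycle S)
    (hdisj : ∀ S' ∈ 𝒞, Disjoint (N.cycVerts S) (N.cycVerts S')) :
    N.IsCycleColl (insert S 𝒞) := by
  constructor
  · intro S' hS'
    rcases Finset.mem_insert.mp hS' with h' | h'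
    · rwa [h']
    · exact h.1 S' h'
  · rw [Finset.coe_insert]
    haveI : Std.Symm (fun S S' : Finset N.E => Disjoint (N.cycVerts S) (N.cycVerts S')) := by
      constructor
      intro a b hab
      exact hab.symm
    refine Set.pairwise_insert_of_symm.mpr ⟨h.2, fun b hb _ => hdisj b hb⟩

lemma collWind_nonneg (hpos : N.PosCycles) {𝒞 : Finset (Finset N.E)}
    (h : N.IsCycleColl 𝒞) : 0 ≤ N.collWind 𝒞 :=
  Finset.sum_nonneg fun S hS => (simpleCycle_shift_pos hpos (h.1 S hS)).le

lemma collWind_pos (hpos : N.PosCycles) {𝒞 : Finset (Finset N.E)}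
    (h : N.IsCycleColl 𝒞) (hne : 𝒞.Nonempty) : 0 < N.collWind 𝒞 :=
  Finset.sum_pos (fun S hS => simpleCycle_shift_pos hpos (h.1 S hS)) hne

end CylNetwork

namespace CylNetwork

variable {K : Type} [Field K] {N : CylNetwork K}

variable (N) in
/-- The finset of all cycle collections. -/
noncomputable def colls : Finset (Finset (Finset N.E)) :=
  (Set.toFinite {𝒞 : Finset (Finset N.E) | N.IsCycleColl 𝒞}).toFinset

lemma mem_colls {𝒞 : Finset (Finset N.E)} : 𝒞 ∈ N.colls ↔ N.IsCycleColl 𝒞 := by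
  simp [colls]

lemma QN_eq (d : ℕ) : N.QN d = ∑ 𝒞 ∈ N.colls,
    Polynomial.C ((-1 : K) ^ (d + 𝒞.card) * N.collWt 𝒞) *
      Polynomial.X ^ ((d : ℤ) - N.collWind 𝒞).toNat := by
  rw [QN]
  exact finsum_mem_eq_finite_toFinset_sum _ (Set.toFinite _)

lemma QN_coeff (d k : ℕ) : (N.QN d).coeff k = ∑ 𝒞 ∈ N.colls,
    (if ((d : ℤ) - N.collWind 𝒞).toNat = k
      then (-1 : K) ^ (d + 𝒞.card) * N.collWt 𝒞 else 0) := by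
  rw [QN_eq, Polynomial.finset_sum_coeff]
  congr 1
  ext 𝒞
  rw [Polynomial.coeff_C_mul, Polynomial.coeff_X_pow, mul_ite, mul_one, mul_zero]
  congr 1
  simp [eq_comm]

lemma collWind_le (hd : IsGreatest N.windSet ((d : ℕ) : ℤ)) {𝒞 : Finset (Finset N.E)}
    (h : N.IsCycleColl 𝒞) : N.collWind 𝒞 ≤ (d : ℤ) :=
  hd.2 ⟨𝒞, h, rfl⟩

lemma QN_coeff_eq_zero_of_lt {d k : ℕ} (hpos : N.PosCycles)
    (hd : IsGreatest N.windSet ((d : ℕ) : ℤ)) (hk : d < k) : (N.QN d).coeff k = 0 := by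
  rw [QN_coeff]
  apply Finset.sum_eq_zero
  intro 𝒞 h𝒞
  have hc := mem_colls.mp h𝒞
  have h1 : 0 ≤ N.collWind 𝒞 := collWind_nonneg hpos hc
  have h2 : ((d : ℤ) - N.collWind 𝒞).toNat ≤ d := by omega
  rw [if_neg (by omega)]

lemma QN_coeff_d (hpos : N.PosCycles) (hd : IsGreatest N.windSet ((d : ℕ) : ℤ)) :
    (N.QN d).coeff d = (-1 : K) ^ d := by
  rw [QN_coeff]
  rw [Finset.sum_eq_single (∅ : Finset (Finset N.E))]
  · simp [collWind, collWt]
  · intro 𝒞 h𝒞 hne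
    have hc := mem_colls.mp h𝒞
    have h1 : 0 < N.collWind 𝒞 :=
      collWind_pos hpos hc (Finset.nonempty_iff_ne_empty.mpr hne)
    have h2 : N.collWind 𝒞 ≤ (d : ℤ) := collWind_le hd hc
    rw [if_neg (by omega)]
  · intro h
    exact absurd (mem_colls.mpr isCycleColl_empty) h

lemma QN_natDegree (hpos : N.PosCycles) (hd : IsGreatest N.windSet ((d : ℕ) : ℤ)) :
    (N.QN d).natDegree = d := by
  apply le_antisymm
  · rw [Polynomial.natDegree_le_iff_coeff_eq_zero]
    intro k hk
    exact QN_coeff_eq_zero_of_lt hpos hd hk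
  · apply Polynomial.le_natDegree_of_ne_zero
    rw [QN_coeff_d hpos hd]
    intro h
    have := pow_ne_zero d (neg_ne_zero.mpr (one_ne_zero (α := K)))
    exact this h

lemma pathSum_eq (hpos : N.PosCycles) (u v : N.V) (ℓ : ℤ) :
    N.pathSum u v ℓ = ∑ p ∈ (finite_walks_shift_eq hpos u v ℓ).toFinset, N.wtList p := by
  rw [pathSum]
  exact finsum_mem_eq_finite_toFinset_sum _ _

end CylNetwork
namespace CylNetwork

variable {K : Type} [Field K] {N : CylNetwork K}

lemma vtx_drop (u : N.V) (p : List N.E) (j m : ℕ) :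
    N.vtx (N.vtx u p j) (p.drop j) m = N.vtx u p (j + m) := by
  simp only [vtx, ← dst_append, ← List.take_add]

lemma start_mem_cycVerts {w : N.V} {b : List N.E} (hc : N.IsCyc w b) :
    w ∈ N.cycVerts b.toFinset := by
  have hok : N.Ok w b := (isWalk_iff.mp hc.1).1
  rw [cycVerts_toFinset hok]
  have h0 : 0 < b.length := List.length_pos_iff.mpr hc.2.1
  exact Finset.mem_image.mpr ⟨0, Finset.mem_range.mpr h0, rfl⟩

lemma unique_containing {𝒞 : Finset (Finset N.E)} (hcoll : N.IsCycleColl 𝒞)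
    {S₁ S₂ : Finset N.E} (h₁ : S₁ ∈ 𝒞) (h₂ : S₂ ∈ 𝒞) {x : N.V}
    (hx₁ : x ∈ N.cycVerts S₁) (hx₂ : x ∈ N.cycVerts S₂) : S₁ = S₂ := by
  by_contra h
  exact Finset.disjoint_left.mp (hcoll.2 h₁ h₂ h) hx₁ hx₂

lemma not_mem_allVerts_erase {𝒞 : Finset (Finset N.E)} (hcoll : N.IsCycleColl 𝒞)
    {S : Finset N.E} (hS : S ∈ 𝒞) {x : N.V} (hx : x ∈ N.cycVerts S) :
    x ∉ N.allVerts (𝒞.erase S) := by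
  intro hmem
  obtain ⟨S', hS', hx'⟩ := mem_allVerts.mp hmem
  have hne := Finset.ne_of_mem_erase hS'
  have := unique_containing hcoll (Finset.mem_of_mem_erase hS') hS hx' hx
  exact hne this

lemma allVerts_insert (S : Finset N.E) (𝒞 : Finset (Finset N.E)) :
    N.allVerts (insert S 𝒞) = N.cycVerts S ∪ N.allVerts 𝒞 :=
  Finset.biUnion_insert

lemma mem_allVerts_of_mem {𝒞 : Finset (Finset N.E)} {S : Finset N.E} (hS : S ∈ 𝒞)
    {x : N.V} (hx : x ∈ N.cycVerts S) : x ∈ N.allVerts 𝒞 :=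
  mem_allVerts.mpr ⟨S, hS, hx⟩

variable (N) in
/-- "Event" at position `k` of a walk: the `k`-th vertex lies in the forbidden set `W`,
or repeats an earlier vertex. -/
def EvP (W : Finset N.V) (u : N.V) (p : List N.E) (k : ℕ) : Prop :=
  N.vtx u p k ∈ W ∨ ∃ i, i < k ∧ N.vtx u p i = N.vtx u p k

instance (W : Finset N.V) (u : N.V) (p : List N.E) : DecidablePred (N.EvP W u p) :=
  fun _ => by unfold EvP; infer_instance

open Classical in
variable (N) in
/-- The sign-reversing involution. -/
noncomputable def flip (u : N.V) (x : Finset (Finset N.E) × List N.E) :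
    Finset (Finset N.E) × List N.E :=
  if hEx : ∃ k, N.EvP (N.allVerts x.1) u x.2 k then
    if N.vtx u x.2 (Nat.find hEx) ∈ N.allVerts x.1 then
      if hrec : ∃ b, N.IsCyc (N.vtx u x.2 (Nat.find hEx)) b ∧ b.toFinset ∈ x.1 then
        (x.1.erase (Classical.choose hrec).toFinset,
          x.2.take (Nat.find hEx) ++ Classical.choose hrec ++ x.2.drop (Nat.find hEx))
      else x
    else
      if hB : ∃ i, i < (Nat.find hEx) ∧ N.vtx u x.2 i = N.vtx u x.2 (Nat.find hEx) then
        (insert ((x.2.take (Nat.find hEx)).drop (Nat.find hB)).toFinset x.1,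
          x.2.take (Nat.find hB) ++ x.2.drop (Nat.find hEx))
      else x
  else x

/-- Characterization of `flip` in case A (first event hits a cycle of the collection). -/
lemma flip_spec_A {u : N.V} {x : Finset (Finset N.E) × List N.E}
    (hcoll : N.IsCycleColl x.1) {j : ℕ}
    (hjev : N.EvP (N.allVerts x.1) u x.2 j)
    (hjmin : ∀ k < j, ¬ N.EvP (N.allVerts x.1) u x.2 k)
    {S : Finset N.E} (hS : S ∈ x.1) (hvS : N.vtx u x.2 j ∈ N.cycVerts S)
    {b : List N.E} (hb : N.IsCyc (N.vtx u x.2 j) b) (hbS : b.toFinset = S) :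
    N.flip u x = (x.1.erase S, x.2.take j ++ b ++ x.2.drop j) := by
  have hEx : ∃ k, N.EvP (N.allVerts x.1) u x.2 k := ⟨j, hjev⟩
  have hfind : Nat.find hEx = j := by
    rw [Nat.find_eq_iff]
    exact ⟨hjev, hjmin⟩
  have hA : N.vtx u x.2 (Nat.find hEx) ∈ N.allVerts x.1 := by
    rw [hfind]; exact mem_allVerts_of_mem hS hvS
  have hb' : N.IsCyc (N.vtx u x.2 (Nat.find hEx)) b := by rw [hfind]; exact hb
  have hrec : ∃ b', N.IsCyc (N.vtx u x.2 (Nat.find hEx)) b' ∧ b'.toFinset ∈ x.1 :=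
    ⟨b, hb', hbS ▸ hS⟩
  have hch : Classical.choose hrec = b := by
    obtain ⟨hc', hm'⟩ := Classical.choose_spec hrec
    have hst : N.vtx u x.2 (Nat.find hEx) ∈ N.cycVerts (Classical.choose hrec).toFinset :=
      start_mem_cycVerts hc'
    have hvS' : N.vtx u x.2 (Nat.find hEx) ∈ N.cycVerts S := by rw [hfind]; exact hvS
    have hSeq : (Classical.choose hrec).toFinset = S :=
      unique_containing hcoll hm' hS hst hvS'
    have hinj : Set.InjOn N.src (S : Set N.E) := (hcoll.1 S hS).1.1
    exact cyc_eq_of_toFinset_eq _ S hinj b _ (isWalk_iff.mp hc'.1).1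
      (isWalk_iff.mp hb'.1).1 hc'.2.2.1 hb'.2.2.1 hSeq hbS
  rw [flip, dif_pos hEx, if_pos hA, dif_pos hrec, hch, hfind, hbS]

/-- Characterization of `flip` in case B (first event is a repeated vertex). -/
lemma flip_spec_B {u : N.V} {x : Finset (Finset N.E) × List N.E} {j : ℕ}
    (hjev : N.EvP (N.allVerts x.1) u x.2 j)
    (hjmin : ∀ k < j, ¬ N.EvP (N.allVerts x.1) u x.2 k)
    (hA : N.vtx u x.2 j ∉ N.allVerts x.1) {i : ℕ} (hij : i < j)
    (hvij : N.vtx u x.2 i = N.vtx u x.2 j)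
    (himin : ∀ i' < i, N.vtx u x.2 i' ≠ N.vtx u x.2 j) :
    N.flip u x =
      (insert ((x.2.take j).drop i).toFinset x.1, x.2.take i ++ x.2.drop j) := by
  have hEx : ∃ k, N.EvP (N.allVerts x.1) u x.2 k := ⟨j, hjev⟩
  have hfind : Nat.find hEx = j := by
    rw [Nat.find_eq_iff]
    exact ⟨hjev, hjmin⟩
  have hA' : ¬ N.vtx u x.2 (Nat.find hEx) ∈ N.allVerts x.1 := by rw [hfind]; exact hA
  have hB : ∃ i', i' < (Nat.find hEx) ∧ N.vtx u x.2 i' = N.vtx u x.2 (Nat.find hEx) := by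
    rw [hfind]; exact ⟨i, hij, hvij⟩
  have hfindB : Nat.find hB = i := by
    rw [Nat.find_eq_iff]
    constructor
    · rw [hfind]; exact ⟨hij, hvij⟩
    · intro i' hi' h'
      rw [hfind] at h'
      exact himin i' hi' h'.2
  rw [flip, dif_pos hEx, if_neg hA', dif_pos hB, hfindB, hfind]

end CylNetwork
namespace CylNetwork

variable {K : Type} [Field K] {N : CylNetwork K}

lemma allVerts_erase_subset (𝒞 : Finset (Finset N.E)) (S : Finset N.E) :
    N.allVerts (𝒞.erase S) ⊆ N.allVerts 𝒞 := by
  intro x hx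
  obtain ⟨S', hS', hx'⟩ := mem_allVerts.mp hx
  exact mem_allVerts_of_mem (Finset.mem_of_mem_erase hS') hx'

lemma vtx_def (u : N.V) (p : List N.E) (k : ℕ) :
    N.dst u (p.take k) = N.vtx u p k := rfl

lemma isWalk_insert_loop {u v : N.V} {p b : List N.E} {j : ℕ} (hj : j ≤ p.length)
    (hw : N.IsWalk u v p) (hb : N.IsWalk (N.vtx u p j) (N.vtx u p j) b) :
    N.IsWalk u v (p.take j ++ b ++ p.drop j) ∧
      N.totalShift (p.take j ++ b ++ p.drop j) = N.totalShift p + N.totalShift b ∧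
      N.wtList (p.take j ++ b ++ p.drop j) = N.wtList p * N.wtList b := by
  rw [isWalk_iff] at hw hb
  obtain ⟨hok, hdst⟩ := hw
  obtain ⟨hokb, hdstb⟩ := hb
  refine ⟨?_, ?_, ?_⟩
  · rw [isWalk_iff, List.append_assoc, ok_append, ok_append, dst_append]
    refine ⟨⟨ok_take hok j, ?_, ?_⟩, ?_⟩
    · exact hokb
    · rw [vtx_def, hdstb]
      exact ok_drop hok j
    · rw [vtx_def, dst_append, hdstb]
      show N.dst (N.dst u (p.take j)) (p.drop j) = v
      rw [dst_take_drop, hdst]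
  · simp only [totalShift_append]
    have : N.totalShift p = N.totalShift (p.take j) + N.totalShift (p.drop j) := by
      rw [← totalShift_append, List.take_append_drop]
    rw [this]; ring
  · simp only [wtList_append]
    have : N.wtList p = N.wtList (p.take j) * N.wtList (p.drop j) := by
      rw [← wtList_append, List.take_append_drop]
    rw [this]; ring

lemma vtx_insert_loop₁ {u : N.V} {p : List N.E} (b : List N.E) {j : ℕ} (hj : j ≤ p.length)
    {k : ℕ} (hk : k ≤ j) :
    N.vtx u (p.take j ++ b ++ p.drop j) k = N.vtx u p k := by
  rw [List.append_assoc, vtx_append, if_pos (by rw [List.length_take]; omega)]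
  exact vtx_take hk

lemma vtx_insert_loop₂ {u : N.V} {p b : List N.E} {j : ℕ} (hj : j ≤ p.length)
    {m : ℕ} (hm : m ≤ b.length) :
    N.vtx u (p.take j ++ b ++ p.drop j) (j + m) = N.vtx (N.vtx u p j) b m := by
  rcases Nat.eq_zero_or_pos m with h0 | h0
  · subst h0
    rw [Nat.add_zero, vtx_insert_loop₁ b hj (le_refl j)]
    simp [vtx]
  · rw [List.append_assoc, vtx_append, if_neg (by rw [List.length_take]; omega)]
    rw [List.length_take, min_eq_left hj]
    rw [vtx_append, if_pos (by omega)]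
    congr 1
    omega

lemma vtx_insert_loop₃ {u : N.V} {p b : List N.E} {j : ℕ} (hj : j ≤ p.length)
    (hb : N.IsWalk (N.vtx u p j) (N.vtx u p j) b) (m : ℕ) :
    N.vtx u (p.take j ++ b ++ p.drop j) (j + b.length + m) = N.vtx u p (j + m) := by
  rcases Nat.eq_zero_or_pos m with h0 | h0
  · subst h0
    rw [Nat.add_zero, Nat.add_zero, vtx_insert_loop₂ hj (le_refl b.length)]
    have : N.vtx (N.vtx u p j) b b.length = N.dst (N.vtx u p j) b := by
      rw [vtx, List.take_of_length_le (le_refl b.length)]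
    rw [this, (isWalk_iff.mp hb).2]
  · rw [List.append_assoc, vtx_append, if_neg (by rw [List.length_take]; omega)]
    rw [List.length_take, min_eq_left hj]
    rw [vtx_append, if_neg (by omega)]
    have h1 : j + b.length + m - j - b.length = m := by omega
    rw [show (j + b.length + m - j) = b.length + m by omega]
    rw [show (b.length + m - b.length) = m by omega]
    have h2 : N.dst (N.vtx u p j) b = N.vtx u p j := (isWalk_iff.mp hb).2
    rw [vtx_def, h2, vtx_drop]

/-- Vertices of a two-part concatenation where the second part is a later tail. -/
lemma vtx_excise₁ {u : N.V} {p : List N.E} (c : List N.E) {i : ℕ} (hi : i ≤ p.length)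
    {k : ℕ} (hk : k ≤ i) : N.vtx u (p.take i ++ c) k = N.vtx u p k := by
  rw [vtx_append, if_pos (by rw [List.length_take]; omega)]
  exact vtx_take hk

lemma vtx_excise₂ {u : N.V} {p : List N.E} {i j : ℕ} (hi : i ≤ p.length)
    (hv : N.vtx u p i = N.vtx u p j) (m : ℕ) (hm : 0 < m) :
    N.vtx u (p.take i ++ p.drop j) (i + m) = N.vtx u p (j + m) := by
  rw [vtx_append, if_neg (by rw [List.length_take]; omega)]
  rw [List.length_take, min_eq_left hi]
  rw [show (i + m - i) = m by omega]
  show N.vtx (N.vtx u p i) (p.drop j) m = _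
  rw [hv, vtx_drop]

end CylNetwork
namespace CylNetwork

variable {K : Type} [Field K] {N : CylNetwork K}

lemma flip_main {u v : N.V} {x : Finset (Finset N.E) × List N.E}
    (hcoll : N.IsCycleColl x.1) (hwalk : N.IsWalk u v x.2) {j : ℕ}
    (hjev : N.EvP (N.allVerts x.1) u x.2 j)
    (hjmin : ∀ k < j, ¬ N.EvP (N.allVerts x.1) u x.2 k)
    (hjlen : j ≤ x.2.length) :
    N.IsCycleColl (N.flip u x).1 ∧ N.IsWalk u v (N.flip u x).2 ∧
    N.collWind (N.flip u x).1 + N.totalShift (N.flip u x).2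
      = N.collWind x.1 + N.totalShift x.2 ∧
    N.collWt (N.flip u x).1 * N.wtList (N.flip u x).2 = N.collWt x.1 * N.wtList x.2 ∧
    ((N.flip u x).1.card = x.1.card + 1 ∨ x.1.card = (N.flip u x).1.card + 1) ∧
    (N.flip u x).2.length ≠ x.2.length ∧
    N.flip u (N.flip u x) = x := by
  have hF1 : ∀ k < j, N.vtx u x.2 k ∉ N.allVerts x.1 :=
    fun k hk hmem => hjmin k hk (Or.inl hmem)
  by_cases hA : N.vtx u x.2 j ∈ N.allVerts x.1
  · -- Case A: detach the cycle through `vtx j` and insert it into the walk.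
    obtain ⟨S, hS, hvS⟩ := mem_allVerts.mp hA
    obtain ⟨b, hb, hbS⟩ := exists_isCyc_eq (hcoll.1 S hS) hvS
    have hflip : N.flip u x = (x.1.erase S, x.2.take j ++ b ++ x.2.drop j) :=
      flip_spec_A hcoll hjev hjmin hS hvS hb hbS
    have hbwalk : N.IsWalk (N.vtx u x.2 j) (N.vtx u x.2 j) b := hb.1
    have hbne := hb.2.1
    have hbnd := hb.2.2.1
    have hblpos : 0 < b.length := List.length_pos_iff.mpr hbne
    obtain ⟨hw', hts', hwt'⟩ := isWalk_insert_loop hjlen hwalk hbwalk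
    have hsumS : ∑ e ∈ S, N.shift e = N.totalShift b := by
      rw [← hbS]; exact sum_shift_toFinset hbnd
    have hprodS : ∏ e ∈ S, N.wt e = N.wtList b := by
      rw [← hbS]; exact prod_wt_toFinset hbnd
    have hF2 : ∀ k ≤ j, ∀ i < k, N.vtx u x.2 i ≠ N.vtx u x.2 k := by
      intro k hk i hik heq
      rcases eq_or_lt_of_le hk with rfl | hkj
      · exact hjmin i hik (Or.inl (by rw [heq]; exact hA))
      · exact hjmin k hkj (Or.inr ⟨i, hik, heq⟩)
    have hbverts : ∀ m, m < b.length → N.vtx (N.vtx u x.2 j) b m ∈ N.cycVerts S := by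
      intro m hm
      rw [← hbS, cycVerts_toFinset (isWalk_iff.mp hbwalk).1]
      exact Finset.mem_image.mpr ⟨m, Finset.mem_range.mpr hm, rfl⟩
    have hbinj := vtx_injOn_of_isCyc hb
    have hSnot : ∀ y ∈ N.cycVerts S, y ∉ N.allVerts (x.1.erase S) :=
      fun y hy => not_mem_allVerts_erase hcoll hS hy
    have hF5 : ∀ k < j, N.vtx u x.2 k ∉ N.cycVerts S :=
      fun k hk hmem => hF1 k hk (mem_allVerts_of_mem hS hmem)
    have h1 : ∀ {k : ℕ}, k ≤ j →
        N.vtx u (x.2.take j ++ b ++ x.2.drop j) k = N.vtx u x.2 k :=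
      fun hk => vtx_insert_loop₁ b hjlen hk
    have h2 : ∀ {m : ℕ}, m ≤ b.length →
        N.vtx u (x.2.take j ++ b ++ x.2.drop j) (j + m) = N.vtx (N.vtx u x.2 j) b m :=
      fun hm => vtx_insert_loop₂ hjlen hm
    have h3 := vtx_insert_loop₃ hjlen hbwalk
    have h30 : N.vtx u (x.2.take j ++ b ++ x.2.drop j) (j + b.length) = N.vtx u x.2 j := by
      have := h3 0
      rw [Nat.add_zero, Nat.add_zero] at this
      exact this
    have hmin2 : ∀ k < j + b.length,
        ¬ N.EvP (N.allVerts (x.1.erase S)) u (x.2.take j ++ b ++ x.2.drop j) k := by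
      intro k hk hev
      cases hev with
      | inl hmem =>
        rcases Nat.lt_or_ge k j with hkj | hkj
        · rw [h1 hkj.le] at hmem
          exact hF1 k hkj (allVerts_erase_subset _ _ hmem)
        · obtain ⟨m, rfl⟩ : ∃ m, k = j + m := ⟨k - j, by omega⟩
          rw [h2 (by omega)] at hmem
          exact hSnot _ (hbverts m (by omega)) hmem
      | inr hrep =>
        obtain ⟨i, hik, heq⟩ := hrep
        rcases Nat.lt_or_ge k j with hkj | hkj
        · rw [h1 (le_of_lt (lt_trans hik hkj)), h1 hkj.le] at heq
          exact hF2 k hkj.le i hik heq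
        · obtain ⟨m, rfl⟩ : ∃ m, k = j + m := ⟨k - j, by omega⟩
          have hmlt : m < b.length := by omega
          rcases Nat.lt_or_ge i j with hij' | hij'
          · rw [h1 hij'.le, h2 hmlt.le] at heq
            exact hF5 i hij' (heq ▸ hbverts m hmlt)
          · obtain ⟨m', rfl⟩ : ∃ m', i = j + m' := ⟨i - j, by omega⟩
            have hm'm : m' < m := by omega
            rw [h2 (le_of_lt (lt_trans hm'm hmlt)), h2 hmlt.le] at heq
            have := hbinj m' m (lt_trans hm'm hmlt) hmlt heq
            omega
    have hveq2 : N.vtx u (x.2.take j ++ b ++ x.2.drop j) j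
        = N.vtx u (x.2.take j ++ b ++ x.2.drop j) (j + b.length) := by
      rw [h1 (le_refl j), h30]
    have hev2 : N.EvP (N.allVerts (x.1.erase S)) u
        (x.2.take j ++ b ++ x.2.drop j) (j + b.length) :=
      Or.inr ⟨j, by omega, hveq2⟩
    have hA2 : N.vtx u (x.2.take j ++ b ++ x.2.drop j) (j + b.length)
        ∉ N.allVerts (x.1.erase S) := by
      rw [h30]
      exact hSnot _ hvS
    have hBmin : ∀ i' < j, N.vtx u (x.2.take j ++ b ++ x.2.drop j) i'
        ≠ N.vtx u (x.2.take j ++ b ++ x.2.drop j) (j + b.length) := by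
      intro i' hi'
      rw [h1 hi'.le, h30]
      exact hF2 j le_rfl i' hi'
    have hflip2 : N.flip u (x.1.erase S, x.2.take j ++ b ++ x.2.drop j) =
        (insert (((x.2.take j ++ b ++ x.2.drop j).take (j + b.length)).drop j).toFinset
            (x.1.erase S),
          (x.2.take j ++ b ++ x.2.drop j).take j
            ++ (x.2.take j ++ b ++ x.2.drop j).drop (j + b.length)) :=
      flip_spec_B (x := (x.1.erase S, x.2.take j ++ b ++ x.2.drop j))
        hev2 hmin2 hA2 (by omega) hveq2 hBmin
    have hlenT : (x.2.take j).length = j := by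
      rw [List.length_take]; omega
    have htake : (x.2.take j ++ b ++ x.2.drop j).take j = x.2.take j := by
      rw [List.append_assoc, List.take_left' hlenT]
    have htake2 : (x.2.take j ++ b ++ x.2.drop j).take (j + b.length)
        = x.2.take j ++ b := by
      rw [List.take_left']
      rw [List.length_append, hlenT]
    have hseg : ((x.2.take j ++ b ++ x.2.drop j).take (j + b.length)).drop j = b := by
      rw [htake2, List.drop_left' hlenT]
    have hdrop : (x.2.take j ++ b ++ x.2.drop j).drop (j + b.length) = x.2.drop j := by
      rw [List.drop_left']
      rw [List.length_append, hlenT]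
    have hcard : 0 < x.1.card := Finset.card_pos.mpr ⟨S, hS⟩
    rw [hflip]
    refine ⟨isCycleColl_erase hcoll S, hw', ?_, ?_, ?_, ?_, ?_⟩
    · show N.collWind (x.1.erase S) + _ = _
      have hsum : ∑ e ∈ S, N.shift e + ∑ T ∈ x.1.erase S, ∑ e ∈ T, N.shift e
          = ∑ T ∈ x.1, ∑ e ∈ T, N.shift e :=
        Finset.add_sum_erase x.1 (fun S => ∑ e ∈ S, N.shift e) hS
      show N.collWind (x.1.erase S) + N.totalShift (x.2.take j ++ b ++ x.2.drop j) = _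
      rw [hts']
      unfold collWind at hsum ⊢
      rw [hsumS] at hsum
      linarith [hsum]
    · show N.collWt (x.1.erase S) * N.wtList (x.2.take j ++ b ++ x.2.drop j) = _
      have hprod : (∏ e ∈ S, N.wt e) * ∏ T ∈ x.1.erase S, ∏ e ∈ T, N.wt e
          = ∏ T ∈ x.1, ∏ e ∈ T, N.wt e :=
        Finset.mul_prod_erase x.1 (fun S => ∏ e ∈ S, N.wt e) hS
      rw [hwt']
      unfold collWt at hprod ⊢
      rw [hprodS] at hprod
      rw [← hprod]
      ring
    · right
      show x.1.card = (x.1.erase S).card + 1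
      rw [Finset.card_erase_of_mem hS]
      omega
    · show (x.2.take j ++ b ++ x.2.drop j).length ≠ x.2.length
      rw [List.length_append, List.length_append, List.length_take, List.length_drop]
      omega
    · rw [hflip2, hseg, hbS, htake, hdrop, Finset.insert_erase hS,
        List.take_append_drop]
  · -- Case B: excise the first repeated segment and add it to the collection.
    have hBx : ∃ i, i < j ∧ N.vtx u x.2 i = N.vtx u x.2 j := hjev.resolve_left hA
    have hBmn : ∀ i' < Nat.find hBx, ¬ (i' < j ∧ N.vtx u x.2 i' = N.vtx u x.2 j) :=
      fun i' h => Nat.find_min hBx h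
    obtain ⟨hij, hvij⟩ := Nat.find_spec hBx
    generalize hidef : Nat.find hBx = i at hij hvij hBmn
    have himin' : ∀ i' < i, N.vtx u x.2 i' ≠ N.vtx u x.2 j := by
      intro i' hi' heq
      exact hBmn i' hi' ⟨by omega, heq⟩
    obtain ⟨hwseg, hwac, hsegne, hseglen, hlensum, htssum, hwtsum, hpeq⟩ :=
      walk_excise hwalk hij hjlen hvij
    have hilen : i ≤ x.2.length := by omega
    have hsegcyc : N.IsCyc (N.vtx u x.2 i) ((x.2.take j).drop i) := by
      apply isCyc_of_vtx_inj hwseg hsegne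
      intro k₁ k₂ hk₁ hk₂ heq
      rw [hseglen] at hk₁ hk₂
      rw [vtx_seg u x.2 k₁ (by omega), vtx_seg u x.2 k₂ (by omega)] at heq
      rcases lt_trichotomy k₁ k₂ with h | h | h
      · exact absurd (Or.inr ⟨i + k₁, by omega, heq⟩) (hjmin (i + k₂) (by omega))
      · exact h
      · exact absurd (Or.inr ⟨i + k₂, by omega, heq.symm⟩) (hjmin (i + k₁) (by omega))
    have hsegnd := hsegcyc.2.2.1
    have hsimple : N.IsSimpleCycle ((x.2.take j).drop i).toFinset :=
      isSimpleCycle_of_isCyc hsegcyc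
    have hsegverts : ∀ y ∈ N.cycVerts ((x.2.take j).drop i).toFinset,
        ∃ m, m < j - i ∧ y = N.vtx u x.2 (i + m) := by
      intro y hy
      rw [cycVerts_toFinset (isWalk_iff.mp hwseg).1] at hy
      obtain ⟨m, hm, hym⟩ := Finset.mem_image.mp hy
      rw [Finset.mem_range, hseglen] at hm
      refine ⟨m, hm, ?_⟩
      rw [← hym, vtx_seg u x.2 m (by omega)]
    have hvtximem : N.vtx u x.2 i ∈ N.cycVerts ((x.2.take j).drop i).toFinset := by
      rw [cycVerts_toFinset (isWalk_iff.mp hwseg).1]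
      refine Finset.mem_image.mpr ⟨0, Finset.mem_range.mpr (by omega), ?_⟩
      simp [vtx]
    have hnotin : ∀ y ∈ N.cycVerts ((x.2.take j).drop i).toFinset,
        y ∉ N.allVerts x.1 := by
      intro y hy hmem
      obtain ⟨m, hm, rfl⟩ := hsegverts y hy
      exact hF1 (i + m) (by omega) hmem
    have hdisj : ∀ S' ∈ x.1,
        Disjoint (N.cycVerts ((x.2.take j).drop i).toFinset) (N.cycVerts S') := by
      intro S' hS'
      rw [Finset.disjoint_left]
      intro y hy hmem
      exact hnotin y hy (mem_allVerts_of_mem hS' hmem)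
    have hSbnot : ((x.2.take j).drop i).toFinset ∉ x.1 := by
      intro hmem
      exact hnotin _ hvtximem (mem_allVerts_of_mem hmem hvtximem)
    have hflip : N.flip u x =
        (insert ((x.2.take j).drop i).toFinset x.1, x.2.take i ++ x.2.drop j) :=
      flip_spec_B hjev hjmin hA hij hvij himin'
    have hcoll' : N.IsCycleColl (insert ((x.2.take j).drop i).toFinset x.1) :=
      isCycleColl_insert hcoll hsimple hdisj
    -- vertex computations on the excised walk
    have hv1 : ∀ {k : ℕ}, k ≤ i →
        N.vtx u (x.2.take i ++ x.2.drop j) k = N.vtx u x.2 k :=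
      fun hk => vtx_excise₁ (x.2.drop j) hilen hk
    have hv2 : ∀ (m : ℕ), 0 < m →
        N.vtx u (x.2.take i ++ x.2.drop j) (i + m) = N.vtx u x.2 (j + m) :=
      fun m hm => vtx_excise₂ hilen hvij m hm
    -- first event of the new pair is at `i`, of type A
    have hev' : N.EvP (N.allVerts (insert ((x.2.take j).drop i).toFinset x.1)) u
        (x.2.take i ++ x.2.drop j) i := by
      left
      rw [hv1 le_rfl]
      exact mem_allVerts_of_mem (Finset.mem_insert_self _ _) hvtximem
    have hnomem : ∀ k < i, N.vtx u x.2 k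
        ∉ N.allVerts (insert ((x.2.take j).drop i).toFinset x.1) := by
      intro k hk hmem
      rw [allVerts_insert, Finset.mem_union] at hmem
      rcases hmem with hmem | hmem
      · obtain ⟨m, hm, heq⟩ := hsegverts _ hmem
        exact hjmin (i + m) (by omega) (Or.inr ⟨k, by omega, heq⟩)
      · exact hF1 k (by omega) hmem
    have hmin' : ∀ k < i, ¬ N.EvP (N.allVerts (insert ((x.2.take j).drop i).toFinset x.1))
        u (x.2.take i ++ x.2.drop j) k := by
      intro k hk hev
      cases hev with
      | inl hmem =>
        rw [hv1 hk.le] at hmem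
        exact hnomem k hk hmem
      | inr hrep =>
        obtain ⟨i', hi'k, heq⟩ := hrep
        rw [hv1 (by omega : i' ≤ i), hv1 hk.le] at heq
        exact hjmin k (by omega) (Or.inr ⟨i', hi'k, heq⟩)
    have hsegcyc' : N.IsCyc (N.vtx u (x.2.take i ++ x.2.drop j) i) ((x.2.take j).drop i) := by
      rw [hv1 le_rfl]
      exact hsegcyc
    have hvS' : N.vtx u (x.2.take i ++ x.2.drop j) i
        ∈ N.cycVerts ((x.2.take j).drop i).toFinset := by
      rw [hv1 le_rfl]
      exact hvtximem
    have hflip2 : N.flip u (insert ((x.2.take j).drop i).toFinset x.1,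
          x.2.take i ++ x.2.drop j) =
        ((insert ((x.2.take j).drop i).toFinset x.1).erase ((x.2.take j).drop i).toFinset,
          (x.2.take i ++ x.2.drop j).take i ++ (x.2.take j).drop i
            ++ (x.2.take i ++ x.2.drop j).drop i) :=
      flip_spec_A (x := (insert ((x.2.take j).drop i).toFinset x.1,
          x.2.take i ++ x.2.drop j))
        hcoll' hev' hmin' (Finset.mem_insert_self _ _) hvS' hsegcyc' rfl
    have hlenT : (x.2.take i).length = i := by
      rw [List.length_take]; omega
    have htake : (x.2.take i ++ x.2.drop j).take i = x.2.take i :=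
      List.take_left' hlenT
    have hdrop : (x.2.take i ++ x.2.drop j).drop i = x.2.drop j :=
      List.drop_left' hlenT
    rw [hflip]
    refine ⟨hcoll', hwac, ?_, ?_, ?_, ?_, ?_⟩
    · show N.collWind (insert ((x.2.take j).drop i).toFinset x.1)
          + N.totalShift (x.2.take i ++ x.2.drop j) = _
      have hsum : ∑ T ∈ insert ((x.2.take j).drop i).toFinset x.1, ∑ e ∈ T, N.shift e
          = ∑ e ∈ ((x.2.take j).drop i).toFinset, N.shift e
            + ∑ T ∈ x.1, ∑ e ∈ T, N.shift e :=
        Finset.sum_insert hSbnot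
      unfold collWind
      rw [hsum, sum_shift_toFinset hsegnd]
      linarith [htssum]
    · show N.collWt (insert ((x.2.take j).drop i).toFinset x.1)
          * N.wtList (x.2.take i ++ x.2.drop j) = _
      have hprod : ∏ T ∈ insert ((x.2.take j).drop i).toFinset x.1, ∏ e ∈ T, N.wt e
          = (∏ e ∈ ((x.2.take j).drop i).toFinset, N.wt e)
            * ∏ T ∈ x.1, ∏ e ∈ T, N.wt e :=
        Finset.prod_insert hSbnot
      unfold collWt
      rw [hprod, prod_wt_toFinset hsegnd, hwtsum]
      ring
    · left
      show (insert ((x.2.take j).drop i).toFinset x.1).card = x.1.card + 1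
      rw [Finset.card_insert_of_notMem hSbnot]
    · show (x.2.take i ++ x.2.drop j).length ≠ x.2.length
      rw [List.length_append, List.length_take, List.length_drop]
      omega
    · rw [hflip2, htake, hdrop, Finset.erase_insert hSbnot, ← hpeq]


end CylNetwork
namespace CylNetwork

variable {K : Type} [Field K] {N : CylNetwork K}

lemma key_identity (hpos : N.PosCycles) {d : ℕ}
    (hd : IsGreatest N.windSet ((d : ℕ) : ℤ)) (u v : N.V) {n : ℕ}
    (hn : (N.shiftBd + 1) * Fintype.card N.V ≤ n) :
    ∑ k ∈ Finset.range (d + 1), (N.QN d).coeff k * N.pathSum u v ((n + k : ℕ) : ℤ) = 0 := by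
  classical
  set allW : Finset (List N.E) :=
    (finite_walks_shift_le hpos u v ((n : ℤ) + d)).toFinset with hallW
  have mem_allW : ∀ p : List N.E,
      p ∈ allW ↔ N.IsWalk u v p ∧ N.totalShift p ≤ (n : ℤ) + d := by
    intro p
    rw [hallW, Set.Finite.mem_toFinset]
    rfl
  set T : Finset (Finset (Finset N.E) × List N.E) :=
    (N.colls ×ˢ allW).filter
      (fun x => N.collWind x.1 + N.totalShift x.2 = (n : ℤ) + d) with hT
  have mem_T : ∀ x, x ∈ T ↔ (N.IsCycleColl x.1 ∧ (N.IsWalk u v x.2 ∧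
      N.totalShift x.2 ≤ (n : ℤ) + d) ∧
      N.collWind x.1 + N.totalShift x.2 = (n : ℤ) + d) := by
    intro x
    rw [hT, Finset.mem_filter, Finset.mem_product, mem_colls, mem_allW]
    tauto
  -- Step 1: rewrite the LHS as a sum over cycle collections.
  have step1 : ∑ k ∈ Finset.range (d + 1), (N.QN d).coeff k
        * N.pathSum u v ((n + k : ℕ) : ℤ)
      = ∑ 𝒞 ∈ N.colls, (-1 : K) ^ (d + 𝒞.card) * N.collWt 𝒞
        * N.pathSum u v ((n : ℤ) + d - N.collWind 𝒞) := by
    have hper : ∀ k ∈ Finset.range (d + 1),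
        (N.QN d).coeff k * N.pathSum u v ((n + k : ℕ) : ℤ)
        = ∑ 𝒞 ∈ N.colls, (if ((d : ℤ) - N.collWind 𝒞).toNat = k
            then (-1 : K) ^ (d + 𝒞.card) * N.collWt 𝒞 else 0)
            * N.pathSum u v ((n + k : ℕ) : ℤ) := by
      intro k _
      rw [QN_coeff, Finset.sum_mul]
    rw [Finset.sum_congr rfl hper, Finset.sum_comm]
    apply Finset.sum_congr rfl
    intro 𝒞 h𝒞
    have hc := mem_colls.mp h𝒞
    have hw0 : 0 ≤ N.collWind 𝒞 := collWind_nonneg hpos hc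
    have hwd : N.collWind 𝒞 ≤ (d : ℤ) := collWind_le hd hc
    have htn : ((d : ℤ) - N.collWind 𝒞).toNat ∈ Finset.range (d + 1) := by
      rw [Finset.mem_range]
      omega
    simp only [ite_mul, zero_mul]
    rw [Finset.sum_ite_eq, if_pos htn]
    have hcast : ((n + ((d : ℤ) - N.collWind 𝒞).toNat : ℕ) : ℤ)
        = (n : ℤ) + d - N.collWind 𝒞 := by
      push_cast
      rw [Int.toNat_of_nonneg (by omega)]
      ring
    rw [hcast]
  -- Step 2: expand path sums and regroup as a sum over pairs.
  have step2 : ∑ 𝒞 ∈ N.colls, (-1 : K) ^ (d + 𝒞.card) * N.collWt 𝒞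
        * N.pathSum u v ((n : ℤ) + d - N.collWind 𝒞)
      = ∑ x ∈ T, (-1 : K) ^ (d + x.1.card) * N.collWt x.1 * N.wtList x.2 := by
    rw [hT, Finset.sum_filter, Finset.sum_product]
    apply Finset.sum_congr rfl
    intro 𝒞 h𝒞
    have hc := mem_colls.mp h𝒞
    have hw0 : 0 ≤ N.collWind 𝒞 := collWind_nonneg hpos hc
    have hset : (finite_walks_shift_eq hpos u v ((n : ℤ) + d - N.collWind 𝒞)).toFinset
        = allW.filter (fun p => N.collWind 𝒞 + N.totalShift p = (n : ℤ) + d) := by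
      ext p
      rw [Set.Finite.mem_toFinset, Finset.mem_filter, mem_allW]
      constructor
      · rintro ⟨hw, hts⟩
        exact ⟨⟨hw, by omega⟩, by omega⟩
      · rintro ⟨⟨hw, _⟩, hts⟩
        exact ⟨hw, by omega⟩
    rw [pathSum_eq hpos u v _, hset, Finset.mul_sum, Finset.sum_filter]
  -- Step 4: the sum over pairs vanishes, by the sign-reversing involution.
  have H : ∀ x ∈ T, N.flip u x ∈ T ∧
      ((-1 : K) ^ (d + x.1.card) * N.collWt x.1 * N.wtList x.2
        + (-1 : K) ^ (d + (N.flip u x).1.card) * N.collWt (N.flip u x).1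
          * N.wtList (N.flip u x).2 = 0) ∧
      N.flip u (N.flip u x) = x ∧ N.flip u x ≠ x := by
    intro x hx
    obtain ⟨hcoll, ⟨hwalk, hle⟩, hbal⟩ := (mem_T x).mp hx
    have hwd : N.collWind x.1 ≤ (d : ℤ) := collWind_le hd hcoll
    have hw0 : 0 ≤ N.collWind x.1 := collWind_nonneg hpos hcoll
    have hts_ge : (n : ℤ) ≤ N.totalShift x.2 := by omega
    have htsub := totalShift_le x.2
    have hcv : 0 < Fintype.card N.V := Fintype.card_pos_iff.mpr ⟨u⟩
    have hlen : Fintype.card N.V ≤ x.2.length := by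
      by_contra hlt
      push_neg at hlt
      have z0 : (n : ℤ) ≤ (N.shiftBd : ℤ) * x.2.length := le_trans hts_ge htsub
      have zlt0 : (x.2.length : ℤ) < (Fintype.card N.V : ℤ) := by exact_mod_cast hlt
      have zlt : (x.2.length : ℤ) ≤ (Fintype.card N.V : ℤ) - 1 := by omega
      have z1 : (N.shiftBd : ℤ) * x.2.length
          ≤ (N.shiftBd : ℤ) * ((Fintype.card N.V : ℤ) - 1) :=
        mul_le_mul_of_nonneg_left zlt (by positivity)
      have z2 : ((N.shiftBd : ℤ) + 1) * (Fintype.card N.V : ℤ) ≤ (n : ℤ) := by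
        exact_mod_cast hn
      have z3 : (N.shiftBd : ℤ) * ((Fintype.card N.V : ℤ) - 1)
          = (N.shiftBd : ℤ) * (Fintype.card N.V : ℤ) - N.shiftBd := by ring
      have z4 : ((N.shiftBd : ℤ) + 1) * (Fintype.card N.V : ℤ)
          = (N.shiftBd : ℤ) * (Fintype.card N.V : ℤ) + Fintype.card N.V := by ring
      have z5 : (1 : ℤ) ≤ (Fintype.card N.V : ℤ) := by exact_mod_cast hcv
      have z6 : (0 : ℤ) ≤ (N.shiftBd : ℤ) := by positivity
      linarith
    have hEx : ∃ k, N.EvP (N.allVerts x.1) u x.2 k := by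
      obtain ⟨i, j, hij, hjc, hv⟩ := exists_vtx_eq u x.2
      exact ⟨j, Or.inr ⟨i, hij, hv⟩⟩
    have hjev := Nat.find_spec hEx
    have hjmin : ∀ k < Nat.find hEx, ¬ N.EvP (N.allVerts x.1) u x.2 k :=
      fun k hk => Nat.find_min hEx hk
    have hjlen : Nat.find hEx ≤ x.2.length := by
      obtain ⟨i, j, hij, hjc, hv⟩ := exists_vtx_eq u x.2
      exact le_trans (le_trans (Nat.find_min' hEx (Or.inr ⟨i, hij, hv⟩)) hjc) hlen
    obtain ⟨hc', hw', hwind', hwt', hcard', hlen', hinv⟩ :=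
      flip_main hcoll hwalk hjev hjmin hjlen
    refine ⟨?_, ?_, hinv, ?_⟩
    · rw [mem_T]
      have hnn := collWind_nonneg hpos hc'
      exact ⟨hc', ⟨hw', by omega⟩, by omega⟩
    · rcases hcard' with h | h
      · have hsgn : (-1 : K) ^ (d + (N.flip u x).1.card)
            = -(-1 : K) ^ (d + x.1.card) := by
          rw [h, show d + (x.1.card + 1) = (d + x.1.card) + 1 by omega, pow_succ]
          ring
        rw [hsgn]
        linear_combination (-((-1 : K) ^ (d + x.1.card))) * hwt'
      · have hsgn : (-1 : K) ^ (d + x.1.card)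
            = -(-1 : K) ^ (d + (N.flip u x).1.card) := by
          rw [h, show d + ((N.flip u x).1.card + 1) = (d + (N.flip u x).1.card) + 1
            by omega, pow_succ]
          ring
        rw [hsgn]
        linear_combination ((-1 : K) ^ (d + (N.flip u x).1.card)) * hwt'
    · intro heq
      exact hlen' (congrArg (fun y => y.2.length) heq)
  have step4 : ∑ x ∈ T, (-1 : K) ^ (d + x.1.card) * N.collWt x.1 * N.wtList x.2 = 0 := by
    refine Finset.sum_involution (fun x _ => N.flip u x)
      (fun x hx => (H x hx).2.1)
      (fun x hx _ => (H x hx).2.2.2)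
      (fun x hx => (H x hx).1)
      (fun x hx => (H x hx).2.2.1)
  rw [step1, step2, step4]

end CylNetwork

/-- The single-path sequence `f(ℓ) = Ñ((u,0),(v,ℓ))` satisfies a linear
recurrence with characteristic polynomial `Q_N(t)`. -/
theorem statement2 {K : Type} [Field K] [CharZero K]
    (N : CylNetwork K) (hpos : N.PosCycles)
    (d : ℕ) (hd : IsGreatest N.windSet (d : ℤ)) (u v : N.V) :
    SatisfiesLinRec (fun ℓ : ℕ => N.pathSum u v ℓ) (N.QN d) := by
  have hdeg : (N.QN d).natDegree = d := CylNetwork.QN_natDegree hpos hd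
  unfold SatisfiesLinRec
  rw [hdeg, Filter.eventually_cofinite]
  apply Set.Finite.subset (Set.finite_Iio ((N.shiftBd + 1) * Fintype.card N.V))
  intro n hn
  simp only [Set.mem_setOf_eq] at hn
  rw [Set.mem_Iio]
  by_contra hge
  push_neg at hge
  exact hn (CylNetwork.key_identity hpos hd u v hge)
end

section
/- (Lindström–Gessel–Viennot) Let G be a directed acyclic graph with edge weights in a commutative ring R, and let u₁, …, u_r and v₁, …, v_r be vertices of G such that for all i, j the set of directed paths from u_i to v_j is finite. For vertices u, v let N(u,v) denote the sum of the weights of all directed paths from u to v, where the weight of a path is the product of the weights of its edges. Then det((N(u_i, v_j))_{i,j=1}^r) = Σ_{σ ∈ S_r} sgn(σ) Σ_{(P₁,…,P_r)} wt(P₁)⋯wt(P_r), where the inner sum is over all r-tuples (P₁,…,P_r) of pairwise vertex-disjoint directed paths with P_i going from u_i to v_{σ(i)}. -/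
/-- `IsWalkG src tgt u v es` : the list of edges `es` is a directed walk from `u` to `v`. -/
def IsWalkG {V E : Type*} (src tgt : E → V) : V → V → List E → Prop
  | u, v, [] => u = v
  | u, v, e :: es => src e = u ∧ IsWalkG src tgt (tgt e) v es

/-- The list of vertices visited by a walk starting at `u` with edges `es`. -/
def walkVerts {V E : Type*} (tgt : E → V) (u : V) (es : List E) : List V :=
  u :: es.map tgt

namespace LGVaux

variable {V E : Type} (src tgt : E → V)

theorem walkVerts_append (u : V) (l₁ l₂ : List E) :
    walkVerts tgt u (l₁ ++ l₂) = walkVerts tgt u l₁ ++ l₂.map tgt := by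
  simp [walkVerts]

theorem walkVerts_cons (u : V) (e : E) (es : List E) :
    walkVerts tgt u (e :: es) = u :: walkVerts tgt (tgt e) es := by
  simp [walkVerts]

variable {src tgt}

theorem walk_append {u x v : V} {es1 es2 : List E} (h1 : IsWalkG src tgt u x es1)
    (h2 : IsWalkG src tgt x v es2) : IsWalkG src tgt u v (es1 ++ es2) := by
  induction es1 generalizing u with
  | nil => have h1' : u = x := h1; subst h1'; exact h2
  | cons e es ih => exact ⟨h1.1, ih h1.2⟩

theorem walk_of_append {u x v : V} {es1 es2 : List E}
    (h : IsWalkG src tgt u v (es1 ++ es2)) (h1 : IsWalkG src tgt u x es1) :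
    IsWalkG src tgt x v es2 := by
  induction es1 generalizing u with
  | nil => have h1' : u = x := h1; subst h1'; exact h
  | cons e es ih => exact ih h.2 h1.2

theorem walk_end_unique {u v v' : V} {es : List E} (h : IsWalkG src tgt u v es)
    (h' : IsWalkG src tgt u v' es) : v = v' := by
  induction es generalizing u with
  | nil => exact (show u = v from h).symm.trans h'
  | cons e es ih => exact ih h.2 h'.2

theorem walk_end_mem {u v : V} {es : List E} (h : IsWalkG src tgt u v es) :
    v ∈ walkVerts tgt u es := by
  induction es generalizing u with
  | nil => simp [walkVerts, show u = v from h]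
  | cons e es ih => rw [walkVerts_cons]; exact List.mem_cons_of_mem _ (ih h.2)

theorem walk_split_first (p : V → Prop) {u v : V} {es : List E}
    (h : IsWalkG src tgt u v es) {y₀ : V} (hy : y₀ ∈ walkVerts tgt u es) (hp : p y₀) :
    ∃ x a a', es = a ++ a' ∧ IsWalkG src tgt u x a ∧ IsWalkG src tgt x v a' ∧ p x ∧
      ∀ y ∈ walkVerts tgt u a, p y → y = x := by
  induction es generalizing u with
  | nil =>
    refine ⟨u, [], [], rfl, rfl, h, ?_, ?_⟩
    · simp only [walkVerts, List.map_nil, List.mem_singleton] at hy; exact hy ▸ hp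
    · intro y hy' _; simpa [walkVerts] using hy'
  | cons e es ih =>
    by_cases hpu : p u
    · exact ⟨u, [], e :: es, rfl, rfl, h, hpu, by intro y hy' _; simpa [walkVerts] using hy'⟩
    · rw [walkVerts_cons] at hy
      have hy' : y₀ ∈ walkVerts tgt (tgt e) es := by
        rcases List.mem_cons.mp hy with h' | h'
        · exact absurd (h' ▸ hp) hpu
        · exact h'
      obtain ⟨x, a, a', rfl, hwa, hwa', hpx, hfirst⟩ := ih h.2 hy'
      refine ⟨x, e :: a, a', rfl, ⟨h.1, hwa⟩, hwa', hpx, ?_⟩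
      intro y hym hpy
      rw [walkVerts_cons] at hym
      rcases List.mem_cons.mp hym with h' | h'
      · exact absurd (h' ▸ hpy) hpu
      · exact hfirst y h' hpy

theorem walk_nodup
    (hacyc : ∀ (w : V) (es : List E), es ≠ [] → IsWalkG src tgt w w es → False)
    {u v : V} {es : List E} (h : IsWalkG src tgt u v es) :
    (walkVerts tgt u es).Nodup := by
  induction es generalizing u with
  | nil => simp [walkVerts]
  | cons e es ih =>
    rw [walkVerts_cons]
    refine List.Nodup.cons ?_ (ih h.2)
    intro hu
    obtain ⟨x, a, a', rfl, hwa, -, hpx, -⟩ :=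
      walk_split_first (p := fun y => y = u) h.2 hu rfl
    exact hacyc u (e :: a) (List.cons_ne_nil _ _) ⟨h.1, hpx ▸ hwa⟩

theorem split_eq_of_le
    (hacyc : ∀ (w : V) (es : List E), es ≠ [] → IsWalkG src tgt w w es → False)
    {u x : V} {b m : List E} (hb : IsWalkG src tgt u x b)
    (hd : IsWalkG src tgt u x (b ++ m)) : m = [] := by
  have hm : IsWalkG src tgt x x m := walk_of_append hd hb
  cases m with
  | nil => rfl
  | cons e es => exact absurd hm (fun hh => hacyc x _ (List.cons_ne_nil _ _) hh)

theorem split_unique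
    (hacyc : ∀ (w : V) (es : List E), es ≠ [] → IsWalkG src tgt w w es → False)
    {u x : V} {b b' d d' : List E} (hb : IsWalkG src tgt u x b)
    (hd : IsWalkG src tgt u x d) (h : b ++ b' = d ++ d') : b = d ∧ b' = d' := by
  have key : ∀ (c c' f f' : List E), IsWalkG src tgt u x c → IsWalkG src tgt u x f →
      c ++ c' = f ++ f' → c.length ≤ f.length → c = f := by
    intro c c' f f' hc hf hcf hlen
    have hpre : c <+: f :=
      List.prefix_of_prefix_length_le ⟨c', hcf⟩ ⟨f', rfl⟩ hlen
    obtain ⟨m, rfl⟩ := hpre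
    have := split_eq_of_le hacyc hc hf
    simp [this]
  rcases le_total b.length d.length with hl | hl
  · have hbd := key b b' d d' hb hd h hl
    subst hbd
    exact ⟨rfl, List.append_cancel_left h⟩
  · have hbd := (key d d' b b' hd hb h.symm hl).symm
    subst hbd
    exact ⟨rfl, List.append_cancel_left h⟩

section SpecDef

variable (src tgt : E → V) {r : ℕ} (u v : Fin r → V)

def Bad (P : Fin r → List E) (i : Fin r) : Prop :=
  ∃ j ≠ i, ¬ List.Disjoint (walkVerts tgt (u i) (P i)) (walkVerts tgt (u j) (P j))

def Spec (σ : Equiv.Perm (Fin r)) (P : Fin r → List E)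
    (d : (Fin r × Fin r) × V × (List E × List E) × (List E × List E)) : Prop :=
  (∀ i, Bad tgt u P i → d.1.1 ≤ i) ∧
  P d.1.1 = d.2.2.1.1 ++ d.2.2.1.2 ∧
  IsWalkG src tgt (u d.1.1) d.2.1 d.2.2.1.1 ∧
  IsWalkG src tgt d.2.1 (v (σ d.1.1)) d.2.2.1.2 ∧
  (∀ y ∈ walkVerts tgt (u d.1.1) d.2.2.1.1,
      (∃ j ≠ d.1.1, y ∈ walkVerts tgt (u j) (P j)) → y = d.2.1) ∧
  d.1.2 ≠ d.1.1 ∧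
  d.2.1 ∈ walkVerts tgt (u d.1.2) (P d.1.2) ∧
  (∀ j, j ≠ d.1.1 → d.2.1 ∈ walkVerts tgt (u j) (P j) → d.1.2 ≤ j) ∧
  P d.1.2 = d.2.2.2.1 ++ d.2.2.2.2 ∧
  IsWalkG src tgt (u d.1.2) d.2.1 d.2.2.2.1 ∧
  IsWalkG src tgt d.2.1 (v (σ d.1.2)) d.2.2.2.2

end SpecDef

variable {src tgt : E → V} {r : ℕ} {u v : Fin r → V}

theorem spec_exists {σ : Equiv.Perm (Fin r)} {P : Fin r → List E}
    (hw : ∀ i, IsWalkG src tgt (u i) (v (σ i)) (P i))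
    (hbad : ¬ Pairwise fun i j : Fin r =>
      List.Disjoint (walkVerts tgt (u i) (P i)) (walkVerts tgt (u j) (P j))) :
    ∃ d, Spec src tgt u v σ P d := by
  classical
  rw [Pairwise] at hbad
  push_neg at hbad
  obtain ⟨i, j, hij, hnd⟩ := hbad
  have hbadi : Bad tgt u P i := ⟨j, Ne.symm hij, hnd⟩
  set S : Finset (Fin r) := Finset.univ.filter (Bad tgt u P) with hS
  have hSne : S.Nonempty := ⟨i, by simp [hS, hbadi]⟩
  set i₀ := S.min' hSne with hi₀
  have hbad₀ : Bad tgt u P i₀ := by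
    have := S.min'_mem hSne
    simp [hS] at this
    exact this
  have himin : ∀ k, Bad tgt u P k → i₀ ≤ k := fun k hk => S.min'_le k (by simp [hS, hk])
  obtain ⟨j', hj'i, hnd'⟩ := hbad₀
  have hex : ∃ y, y ∈ walkVerts tgt (u i₀) (P i₀) ∧ y ∈ walkVerts tgt (u j') (P j') := by
    by_contra hc
    push_neg at hc
    exact hnd' (fun y hy1 hy2 => hc y hy1 hy2)
  obtain ⟨y₀, hy₁, hy₂⟩ := hex
  obtain ⟨x, a, a', heq, hwa, hwa', hpx, hfirst⟩ :=
    walk_split_first (p := fun y => ∃ j ≠ i₀, y ∈ walkVerts tgt (u j) (P j))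
      (hw i₀) hy₁ ⟨j', hj'i, hy₂⟩
  obtain ⟨j₁, hj₁, hxj₁⟩ := hpx
  set T : Finset (Fin r) :=
    Finset.univ.filter (fun j => j ≠ i₀ ∧ x ∈ walkVerts tgt (u j) (P j)) with hT
  have hTne : T.Nonempty := ⟨j₁, by simp [hT, hj₁, hxj₁]⟩
  set j₀ := T.min' hTne with hj₀
  have hj₀mem : j₀ ≠ i₀ ∧ x ∈ walkVerts tgt (u j₀) (P j₀) := by
    have := T.min'_mem hTne
    simp [hT] at this
    exact this
  have hjmin : ∀ j, j ≠ i₀ → x ∈ walkVerts tgt (u j) (P j) → j₀ ≤ j := fun j h1 h2 =>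
    T.min'_le j (by simp [hT, h1, h2])
  obtain ⟨x', b, b', heqb, hwb, hwb', hpx', -⟩ :=
    walk_split_first (p := fun y => y = x) (hw j₀) hj₀mem.2 rfl
  subst hpx'
  exact ⟨((i₀, j₀), x', (a, a'), (b, b')),
    himin, heq, hwa, hwa', hfirst, hj₀mem.1, hj₀mem.2, hjmin, heqb, hwb, hwb'⟩

theorem spec_unique
    (hacyc : ∀ (w : V) (es : List E), es ≠ [] → IsWalkG src tgt w w es → False)
    {σ : Equiv.Perm (Fin r)} {P : Fin r → List E} {d₁ d₂}
    (h1 : Spec src tgt u v σ P d₁) (h2 : Spec src tgt u v σ P d₂) : d₁ = d₂ := by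
  obtain ⟨⟨i₁, j₁⟩, x₁, ⟨a₁, a₁'⟩, b₁, b₁'⟩ := d₁
  obtain ⟨⟨i₂, j₂⟩, x₂, ⟨a₂, a₂'⟩, b₂, b₂'⟩ := d₂
  obtain ⟨hmin1, hPa1, hwa1, hwa1', hfirst1, hj1ne, hxv1, hjmin1, hPb1, hwb1, hwb1'⟩ := h1
  obtain ⟨hmin2, hPa2, hwa2, hwa2', hfirst2, hj2ne, hxv2, hjmin2, hPb2, hwb2, hwb2'⟩ := h2
  have hmemx : ∀ (i : Fin r) (x : V) (a a' : List E), IsWalkG src tgt (u i) x a →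
      P i = a ++ a' → x ∈ walkVerts tgt (u i) (P i) := by
    intro i x a a' hwa hPa
    rw [hPa, walkVerts_append]
    exact List.mem_append_left _ (walk_end_mem hwa)
  have hx1i : x₁ ∈ walkVerts tgt (u i₁) (P i₁) := hmemx i₁ x₁ a₁ a₁' hwa1 hPa1
  have hx2i : x₂ ∈ walkVerts tgt (u i₂) (P i₂) := hmemx i₂ x₂ a₂ a₂' hwa2 hPa2
  have hbad1 : Bad tgt u P i₁ := ⟨j₁, hj1ne, fun hd => hd hx1i hxv1⟩
  have hbad2 : Bad tgt u P i₂ := ⟨j₂, hj2ne, fun hd => hd hx2i hxv2⟩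
  obtain rfl : i₁ = i₂ := le_antisymm (hmin1 i₂ hbad2) (hmin2 i₁ hbad1)
  have key : ∀ (aa aa' cc cc' : List E) (xx yy : V),
      IsWalkG src tgt (u i₁) xx aa → P i₁ = aa ++ aa' →
      (∃ j ≠ i₁, xx ∈ walkVerts tgt (u j) (P j)) →
      P i₁ = cc ++ cc' →
      (∀ y ∈ walkVerts tgt (u i₁) cc,
        (∃ j ≠ i₁, y ∈ walkVerts tgt (u j) (P j)) → y = yy) →
      aa.length ≤ cc.length → xx = yy := by
    intro aa aa' cc cc' xx yy hwaa hPaa hpxx hPcc hfirstcc hlen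
    have hpre : aa <+: cc :=
      List.prefix_of_prefix_length_le ⟨aa', hPaa.symm⟩ ⟨cc', hPcc.symm⟩ hlen
    have hvpre : walkVerts tgt (u i₁) aa <+: walkVerts tgt (u i₁) cc := by
      obtain ⟨m, rfl⟩ := hpre
      rw [walkVerts_append]
      exact ⟨List.map tgt m, rfl⟩
    exact hfirstcc xx (hvpre.subset (walk_end_mem hwaa)) hpxx
  obtain rfl : x₁ = x₂ := by
    rcases le_total a₁.length a₂.length with hl | hl
    · exact key a₁ a₁' a₂ a₂' x₁ x₂ hwa1 hPa1 ⟨j₁, hj1ne, hxv1⟩ hPa2 hfirst2 hl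
    · exact (key a₂ a₂' a₁ a₁' x₂ x₁ hwa2 hPa2 ⟨j₂, hj2ne, hxv2⟩ hPa1 hfirst1 hl).symm
  obtain ⟨rfl, rfl⟩ := split_unique hacyc hwa1 hwa2 (hPa1.symm.trans hPa2)
  obtain rfl : j₁ = j₂ := le_antisymm (hjmin1 j₂ hj2ne hxv2) (hjmin2 j₁ hj1ne hxv1)
  obtain ⟨rfl, rfl⟩ := split_unique hacyc hwb1 hwb2 (hPb1.symm.trans hPb2)
  rfl


theorem spec_swap
    (hacyc : ∀ (w : V) (es : List E), es ≠ [] → IsWalkG src tgt w w es → False)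
    {σ : Equiv.Perm (Fin r)} {P : Fin r → List E} {i₀ j₀ : Fin r} {x : V}
    {a a' b b' : List E}
    (hw : ∀ i, IsWalkG src tgt (u i) (v (σ i)) (P i))
    (hs : Spec src tgt u v σ P ((i₀, j₀), x, (a, a'), (b, b'))) :
    Spec src tgt u v (σ * Equiv.swap i₀ j₀)
      (Function.update (Function.update P i₀ (a ++ b')) j₀ (b ++ a'))
      ((i₀, j₀), x, (a, b'), (b, a')) := by
  classical
  obtain ⟨hmin, hPa, hwa, hwa', hfirst, hjne, hxv, hjmin, hPb, hwb, hwb'⟩ := hs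
  set P' := Function.update (Function.update P i₀ (a ++ b')) j₀ (b ++ a') with hP'
  have hij : i₀ ≠ j₀ := Ne.symm hjne
  have hP'i : P' i₀ = a ++ b' := by
    rw [hP', Function.update_of_ne hij, Function.update_self]
  have hP'j : P' j₀ = b ++ a' := by rw [hP', Function.update_self]
  have hP'k : ∀ k, k ≠ i₀ → k ≠ j₀ → P' k = P k := by
    intro k h1 h2
    rw [hP', Function.update_of_ne h2, Function.update_of_ne h1]
  have hσ'i : (σ * Equiv.swap i₀ j₀) i₀ = σ j₀ := by
    simp [Equiv.Perm.mul_apply]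
  have hσ'j : (σ * Equiv.swap i₀ j₀) j₀ = σ i₀ := by
    simp [Equiv.Perm.mul_apply]
  -- memberships of x
  have hxa : x ∈ walkVerts tgt (u i₀) a := walk_end_mem hwa
  have hxb : x ∈ walkVerts tgt (u j₀) b := walk_end_mem hwb
  have hxi : x ∈ walkVerts tgt (u i₀) (P i₀) := by
    rw [hPa, walkVerts_append]; exact List.mem_append_left _ hxa
  have hxi' : x ∈ walkVerts tgt (u i₀) (P' i₀) := by
    rw [hP'i, walkVerts_append]; exact List.mem_append_left _ hxa
  have hxj' : x ∈ walkVerts tgt (u j₀) (P' j₀) := by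
    rw [hP'j, walkVerts_append]; exact List.mem_append_left _ hxb
  have hi0j0 : i₀ ≤ j₀ := hmin j₀ ⟨i₀, hij, fun hd => hd hxv hxi⟩
  -- vertex transfer
  have hsub : ∀ k, ∀ y, y ∈ walkVerts tgt (u k) (P' k) →
      y ∈ walkVerts tgt (u k) (P k) ∨ y ∈ walkVerts tgt (u i₀) (P i₀) ∨
        y ∈ walkVerts tgt (u j₀) (P j₀) := by
    intro k y hy
    by_cases hk1 : k = i₀
    · subst hk1
      rw [hP'i, walkVerts_append] at hy
      rcases List.mem_append.mp hy with h | h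
      · refine Or.inr (Or.inl ?_)
        rw [hPa, walkVerts_append]; exact List.mem_append_left _ h
      · refine Or.inr (Or.inr ?_)
        rw [hPb, walkVerts_append]; exact List.mem_append_right _ h
    by_cases hk2 : k = j₀
    · subst hk2
      rw [hP'j, walkVerts_append] at hy
      rcases List.mem_append.mp hy with h | h
      · refine Or.inr (Or.inr ?_)
        rw [hPb, walkVerts_append]; exact List.mem_append_left _ h
      · refine Or.inr (Or.inl ?_)
        rw [hPa, walkVerts_append]; exact List.mem_append_right _ h
    · rw [hP'k k hk1 hk2] at hy; exact Or.inl hy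
  refine ⟨?_, ?_, ?_, ?_, ?_, hjne, ?_, ?_, ?_, ?_, ?_⟩
  · -- minimality of i₀ for P'
    rintro i ⟨j, hji, hnd⟩
    by_cases hii : i = i₀
    · exact hii.ge
    by_cases hij0 : i = j₀
    · exact hij0 ▸ hi0j0
    have hex : ∃ y, y ∈ walkVerts tgt (u i) (P' i) ∧ y ∈ walkVerts tgt (u j) (P' j) := by
      by_contra hc
      push_neg at hc
      exact hnd (fun y hy1 hy2 => hc y hy1 hy2)
    obtain ⟨y, hy1, hy2⟩ := hex
    have hy1' : y ∈ walkVerts tgt (u i) (P i) := by rwa [hP'k i hii hij0] at hy1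
    have hbadi : Bad tgt u P i := by
      rcases hsub j y hy2 with h | h | h
      · exact ⟨j, hji, fun hd => hd hy1' h⟩
      · exact ⟨i₀, fun hh => hii hh.symm, fun hd => hd hy1' h⟩
      · exact ⟨j₀, fun hh => hij0 hh.symm, fun hd => hd hy1' h⟩
    exact hmin i hbadi
  · exact hP'i
  · exact hwa
  · rw [hσ'i]; exact hwb'
  · -- firstness
    intro y hy hyex
    obtain ⟨j, hjne', hyj⟩ := hyex
    by_cases hjj : j = j₀
    · subst hjj
      rw [hP'j, walkVerts_append] at hyj
      rcases List.mem_append.mp hyj with h | h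
      · refine hfirst y hy ⟨j, hjne', ?_⟩
        rw [hPb, walkVerts_append]; exact List.mem_append_left _ h
      · -- y in map tgt a' and in walkVerts u i₀ a : contradicts nodup
        exfalso
        have hnod : (walkVerts tgt (u i₀) (P i₀)).Nodup := walk_nodup hacyc (hw i₀)
        rw [hPa, walkVerts_append] at hnod
        exact (List.disjoint_of_nodup_append hnod) hy h
    · refine hfirst y hy ⟨j, hjne', ?_⟩
      rwa [hP'k j hjne' hjj] at hyj
  · exact hxj'
  · -- minimality of j₀ for P'
    intro j hjne' hxj
    by_cases hjj : j = j₀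
    · exact hjj.ge
    · refine hjmin j hjne' ?_
      rwa [hP'k j hjne' hjj] at hxj
  · exact hP'j
  · exact hwb
  · rw [hσ'j]; exact hwa'

noncomputable def gswap (src tgt : E → V) {r : ℕ} (u v : Fin r → V)
    (σ : Equiv.Perm (Fin r)) (P : Fin r → List E) :
    Equiv.Perm (Fin r) × (Fin r → List E) := by
  classical
  exact if h : ∃ d, Spec src tgt u v σ P d then
    ((σ * Equiv.swap h.choose.1.1 h.choose.1.2),
      Function.update (Function.update P h.choose.1.1 (h.choose.2.2.1.1 ++ h.choose.2.2.2.2))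
        h.choose.1.2 (h.choose.2.2.2.1 ++ h.choose.2.2.1.2))
  else (σ, P)


variable (hfinst : True)

theorem gswap_eq
    (hacyc : ∀ (w : V) (es : List E), es ≠ [] → IsWalkG src tgt w w es → False)
    {σ : Equiv.Perm (Fin r)} {P : Fin r → List E} {i₀ j₀ : Fin r} {x : V}
    {a a' b b' : List E}
    (hs : Spec src tgt u v σ P ((i₀, j₀), x, (a, a'), (b, b'))) :
    gswap src tgt u v σ P =
      (σ * Equiv.swap i₀ j₀,
        Function.update (Function.update P i₀ (a ++ b')) j₀ (b ++ a')) := by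
  have hex : ∃ d, Spec src tgt u v σ P d := ⟨_, hs⟩
  rw [gswap, dif_pos hex]
  have hch := spec_unique hacyc hex.choose_spec hs
  rw [hch]

end LGVaux

/-- **Lindström–Gessel–Viennot.** For a directed acyclic graph with weights
in a commutative ring `R` and vertices `u₁,…,u_r`, `v₁,…,v_r` with finitely many paths
from each `u_i` to each `v_j`,
`det (N(u_i,v_j))_{i,j} = Σ_{σ ∈ S_r} sgn(σ) Σ_{vertex-disjoint (P₁,…,P_r), P_i : u_i → v_{σ(i)}} wt(P₁)⋯wt(P_r)`. -/
theorem statement3 {V E R : Type} [CommRing R] (src tgt : E → V) (wt : E → R)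
    (hacyc : ∀ (v : V) (es : List E), es ≠ [] → IsWalkG src tgt v v es → False)
    (r : ℕ) (u v : Fin r → V)
    (hfin : ∀ i j, {es : List E | IsWalkG src tgt (u i) (v j) es}.Finite) :
    Matrix.det
      (Matrix.of fun i j =>
        ∑ᶠ es ∈ {es : List E | IsWalkG src tgt (u i) (v j) es}, ((es.map wt).prod)) =
    ∑ σ : Equiv.Perm (Fin r), (Equiv.Perm.sign σ : ℤ) •
      ∑ᶠ P ∈ {P : Fin r → List E |
          (∀ i, IsWalkG src tgt (u i) (v (σ i)) (P i)) ∧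
          Pairwise fun i j =>
            List.Disjoint (walkVerts tgt (u i) (P i)) (walkVerts tgt (u j) (P j))},
        ∏ i, ((P i).map wt).prod := by
  classical
  open LGVaux in
  set T : Fin r → Fin r → Finset (List E) := fun i j => (hfin i j).toFinset with hT
  have hmemT : ∀ (i j : Fin r) (es : List E),
      es ∈ T i j ↔ IsWalkG src tgt (u i) (v j) es := fun i j es => (hfin i j).mem_toFinset
  have hentry : ∀ i j : Fin r,
      (∑ᶠ es ∈ {es : List E | IsWalkG src tgt (u i) (v j) es}, ((es.map wt).prod))
        = ∑ es ∈ T i j, (es.map wt).prod := by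
    intro i j
    rw [show {es : List E | IsWalkG src tgt (u i) (v j) es} = ↑(T i j) from
      ((hfin i j).coe_toFinset).symm, finsum_mem_coe_finset]
  set Good : (Fin r → List E) → Prop := fun P => Pairwise fun i j =>
    List.Disjoint (walkVerts tgt (u i) (P i)) (walkVerts tgt (u j) (P j)) with hGood
  set w : (Fin r → List E) → R := fun P => ∏ i, ((P i).map wt).prod with hwdef
  have hRHS : ∀ σ : Equiv.Perm (Fin r),
      (∑ᶠ P ∈ {P : Fin r → List E |
          (∀ i, IsWalkG src tgt (u i) (v (σ i)) (P i)) ∧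
          Pairwise fun i j =>
            List.Disjoint (walkVerts tgt (u i) (P i)) (walkVerts tgt (u j) (P j))},
        ∏ i, ((P i).map wt).prod)
        = ∑ P ∈ (Fintype.piFinset fun i => T i (σ i)).filter Good, w P := by
    intro σ
    have hset : {P : Fin r → List E |
          (∀ i, IsWalkG src tgt (u i) (v (σ i)) (P i)) ∧
          Pairwise fun i j =>
            List.Disjoint (walkVerts tgt (u i) (P i)) (walkVerts tgt (u j) (P j))}
        = ↑((Fintype.piFinset fun i => T i (σ i)).filter Good) := by
      ext P
      simp only [Set.mem_setOf_eq, Finset.coe_filter, Fintype.mem_piFinset, hmemT, hGood]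
    rw [hset, finsum_mem_coe_finset]
  -- LHS
  rw [← Matrix.det_transpose, Matrix.det_apply]
  simp only [Matrix.transpose_apply, Matrix.of_apply, hentry]
  simp only [Finset.prod_univ_sum]
  simp only [hRHS]
  simp only [Units.smul_def]
  -- now both sides are sums over σ
  have hsplit : ∀ σ : Equiv.Perm (Fin r),
      ∑ P ∈ Fintype.piFinset (fun i => T i (σ i)), w P
        = (∑ P ∈ (Fintype.piFinset fun i => T i (σ i)).filter Good, w P)
          + ∑ P ∈ (Fintype.piFinset fun i => T i (σ i)).filter (fun P => ¬ Good P), w P :=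
    fun σ => (Finset.sum_filter_add_sum_filter_not _ _ _).symm
  have hzero : ∑ σ : Equiv.Perm (Fin r), (Equiv.Perm.sign σ : ℤ) •
      ∑ P ∈ (Fintype.piFinset fun i => T i (σ i)).filter (fun P => ¬ Good P), w P = 0 := by
    simp only [Finset.smul_sum]
    rw [Finset.sum_sigma']
    set s : Finset ((_ : Equiv.Perm (Fin r)) × (Fin r → List E)) :=
      Finset.univ.sigma
        (fun σ => (Fintype.piFinset fun i => T i (σ i)).filter (fun P => ¬ Good P)) with hs
    have hmem : ∀ A : (_ : Equiv.Perm (Fin r)) × (Fin r → List E), A ∈ s →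
        (∀ i, IsWalkG src tgt (u i) (v (A.1 i)) (A.2 i)) ∧ ¬ Good A.2 := by
      intro A hA
      rw [hs, Finset.mem_sigma] at hA
      have h2 := Finset.mem_filter.mp hA.2
      exact ⟨fun i => (hmemT i (A.1 i) (A.2 i)).mp ((Fintype.mem_piFinset).mp h2.1 i), h2.2⟩
    have hG : ∀ (σ : Equiv.Perm (Fin r)) (P : Fin r → List E),
        (⟨σ, P⟩ : (_ : Equiv.Perm (Fin r)) × (Fin r → List E)) ∈ s →
        ((Equiv.Perm.sign (gswap src tgt u v σ P).1 : ℤ) = -(Equiv.Perm.sign σ : ℤ)) ∧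
        w (gswap src tgt u v σ P).2 = w P ∧
        (gswap src tgt u v σ P).1 ≠ σ ∧
        (⟨(gswap src tgt u v σ P).1, (gswap src tgt u v σ P).2⟩ :
          (_ : Equiv.Perm (Fin r)) × (Fin r → List E)) ∈ s ∧
        gswap src tgt u v (gswap src tgt u v σ P).1 (gswap src tgt u v σ P).2 = (σ, P) := by
      intro σ P hA
      obtain ⟨hw, hnotgood⟩ := hmem ⟨σ, P⟩ hA
      dsimp only at hw hnotgood
      obtain ⟨d, hsd⟩ := spec_exists hw hnotgood
      obtain ⟨⟨i₀, j₀⟩, x, ⟨a, a'⟩, b, b'⟩ := d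
      have hgeq := gswap_eq hacyc hsd
      set σ' := σ * Equiv.swap i₀ j₀ with hσ'def
      set P' := Function.update (Function.update P i₀ (a ++ b')) j₀ (b ++ a') with hP'def
      have hsd2 := hsd
      obtain ⟨hmin, hPa, hwa, hwa', hfirst, hjne, hxv, hjmin, hPb, hwb, hwb'⟩ := hsd2
      dsimp only at hmin hPa hwa hwa' hfirst hjne hxv hjmin hPb hwb hwb' hgeq
      have hij : i₀ ≠ j₀ := Ne.symm hjne
      have hP'i : P' i₀ = a ++ b' := by
        rw [hP'def, Function.update_of_ne hij, Function.update_self]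
      have hP'j : P' j₀ = b ++ a' := by rw [hP'def, Function.update_self]
      have hP'k : ∀ k, k ≠ i₀ → k ≠ j₀ → P' k = P k := by
        intro k h1 h2
        rw [hP'def, Function.update_of_ne h2, Function.update_of_ne h1]
      have hσ'i : σ' i₀ = σ j₀ := by
        rw [hσ'def]; simp [Equiv.Perm.mul_apply]
      have hσ'j : σ' j₀ = σ i₀ := by
        rw [hσ'def]; simp [Equiv.Perm.mul_apply]
      have hσ'k : ∀ k, k ≠ i₀ → k ≠ j₀ → σ' k = σ k := by
        intro k h1 h2
        rw [hσ'def]; simp [Equiv.Perm.mul_apply, Equiv.swap_apply_of_ne_of_ne h1 h2]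
      have hw' : ∀ i, IsWalkG src tgt (u i) (v (σ' i)) (P' i) := by
        intro i
        by_cases h1 : i = i₀
        · subst h1; rw [hP'i, hσ'i]; exact walk_append hwa hwb'
        by_cases h2 : i = j₀
        · subst h2; rw [hP'j, hσ'j]; exact walk_append hwb hwa'
        · rw [hP'k i h1 h2, hσ'k i h1 h2]; exact hw i
      have hxi' : x ∈ walkVerts tgt (u i₀) (P' i₀) := by
        rw [hP'i, walkVerts_append]
        exact List.mem_append_left _ (walk_end_mem hwa)
      have hxj' : x ∈ walkVerts tgt (u j₀) (P' j₀) := by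
        rw [hP'j, walkVerts_append]
        exact List.mem_append_left _ (walk_end_mem hwb)
      have hnotgood' : ¬ Good P' := by
        intro hgood
        rw [hGood] at hgood
        exact (hgood hij) hxi' hxj'
      have h1 : (Equiv.Perm.sign σ' : ℤ) = -(Equiv.Perm.sign σ : ℤ) := by
        rw [hσ'def]
        simp [Equiv.Perm.sign_mul, Equiv.Perm.sign_swap hij]
      have h2 : w P' = w P := by
        have e1 : ∀ Q : Fin r → List E, w Q = ((Q i₀).map wt).prod *
            (((Q j₀).map wt).prod *
              ∏ k ∈ (Finset.univ.erase i₀).erase j₀, ((Q k).map wt).prod) := by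
          intro Q
          simp only [hwdef]
          rw [← Finset.mul_prod_erase Finset.univ _ (Finset.mem_univ i₀),
              ← Finset.mul_prod_erase (Finset.univ.erase i₀) _
                (Finset.mem_erase.mpr ⟨hjne, Finset.mem_univ j₀⟩)]
        have e2 : ∏ k ∈ (Finset.univ.erase i₀).erase j₀, ((P' k).map wt).prod
            = ∏ k ∈ (Finset.univ.erase i₀).erase j₀, ((P k).map wt).prod := by
          refine Finset.prod_congr rfl fun k hk => ?_
          rw [Finset.mem_erase, Finset.mem_erase] at hk
          rw [hP'k k hk.2.1 hk.1]
        rw [e1 P', e1 P, e2, hP'i, hP'j, hPa, hPb]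
        simp only [List.map_append, List.prod_append]
        ring
      have h3 : σ' ≠ σ := by
        intro hcontr
        have heval : σ' i₀ = σ i₀ := by rw [hcontr]
        rw [hσ'i] at heval
        exact hjne (σ.injective heval)
      have h4mem : (⟨σ', P'⟩ : (_ : Equiv.Perm (Fin r)) × (Fin r → List E)) ∈ s := by
        rw [hs, Finset.mem_sigma]
        refine ⟨Finset.mem_univ _, Finset.mem_filter.mpr ⟨?_, hnotgood'⟩⟩
        rw [Fintype.mem_piFinset]
        intro i
        exact (hmemT i (σ' i) (P' i)).mpr (hw' i)
      have hs' := spec_swap hacyc hw hsd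
      have h5 : gswap src tgt u v σ' P' = (σ, P) := by
        rw [gswap_eq hacyc hs']
        have hσback : σ' * Equiv.swap i₀ j₀ = σ := by
          rw [hσ'def, mul_assoc, Equiv.swap_mul_self, mul_one]
        have hPback : Function.update (Function.update P' i₀ (a ++ a')) j₀ (b ++ b') = P := by
          funext k
          by_cases hk : k = j₀
          · subst hk; rw [Function.update_self, hPb]
          by_cases hk2 : k = i₀
          · subst hk2; rw [Function.update_of_ne hij, Function.update_self, hPa]
          · rw [Function.update_of_ne hk, Function.update_of_ne hk2, hP'k k hk2 hk]
        rw [hσback, hPback]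
      rw [hgeq]
      exact ⟨h1, h2, h3, h4mem, h5⟩
    refine Finset.sum_involution
      (fun A _ => ⟨(gswap src tgt u v A.1 A.2).1, (gswap src tgt u v A.1 A.2).2⟩)
      ?_ ?_ ?_ ?_
    · rintro ⟨σ, P⟩ hA
      dsimp only
      obtain ⟨h1, h2, -, -, -⟩ := hG σ P hA
      rw [h1, h2, neg_smul]
      exact add_neg_cancel _
    · rintro ⟨σ, P⟩ hA -
      dsimp only
      obtain ⟨-, -, h3, -, -⟩ := hG σ P hA
      intro hcontr
      exact h3 (congrArg Sigma.fst hcontr)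
    · rintro ⟨σ, P⟩ hA
      dsimp only
      obtain ⟨-, -, -, h4, -⟩ := hG σ P hA
      exact h4
    · rintro ⟨σ, P⟩ hA
      dsimp only
      obtain ⟨-, -, -, -, h5⟩ := hG σ P hA
      rw [h5]
  change ∑ σ : Equiv.Perm (Fin r), (Equiv.Perm.sign σ : ℤ) •
      ∑ P ∈ Fintype.piFinset (fun i => T i (σ i)), w P = _
  simp only [hsplit, smul_add, Finset.sum_add_distrib, hzero, add_zero]
end

section
/- For integers m ≥ 2 and 0 ≤ k ≤ ⌊m/2⌋, let H_k ∈ ℤ[q] be the sum of q^{i₁+i₂+⋯+i_k} over all k-element subsets {i₁ < i₂ < … < i_k} of {0, 1, …, m−2} containing no two consecutive integers (with H₀ = 1), and set Q_{N_m}(t) = Σ_{k=0}^{⌊m/2⌋} (−t)^{⌊m/2⌋−k} H_k. Let F_n(t) be the Carlitz q-Fibonacci polynomials, defined by F₀(t) = 0, F₁(t) = 1, and F_n(t) = F_{n−1}(t) + q^{n−3} t F_{n−2}(t) for n ≥ 2. Then Q_{N_m}(t) = (−t)^{⌊m/2⌋} F_{m+1}(−1/t); equivalently, F_{m+1}(t)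 = Σ_{k=0}^{⌊m/2⌋} H_k t^k. -/
/-- `Hpoly m k ∈ ℤ[q]`: the sum of `q^{i₁+⋯+i_k}` over all `k`-element subsets
`{i₁ < … < i_k}` of `{0,…,m−2}` containing no two consecutive integers. -/
noncomputable def Hpoly (m k : ℕ) : Polynomial ℤ :=
  ∑ᶠ s ∈ {s : Finset ℕ | s.card = k ∧ (∀ i ∈ s, i + 2 ≤ m) ∧ (∀ i ∈ s, i + 1 ∉ s)},
    (Polynomial.X : Polynomial ℤ) ^ (∑ i ∈ s, i)

/-- `Q_{N_m}(t) = Σ_{k=0}^{⌊m/2⌋} (−t)^{⌊m/2⌋−k} H_k ∈ ℤ[q][t]` (inner variable `q`,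
outer variable `t`). -/
noncomputable def QNm (m : ℕ) : Polynomial (Polynomial ℤ) :=
  ∑ k ∈ Finset.range (m / 2 + 1),
    Polynomial.C ((-1 : Polynomial ℤ) ^ (m / 2 - k) * Hpoly m k) *
      (Polynomial.X : Polynomial (Polynomial ℤ)) ^ (m / 2 - k)

open Polynomial Finset LaurentPolynomial

def idxSet (m k : ℕ) : Finset (Finset ℕ) :=
  ((Finset.range (m-1)).powerset).filter (fun s => s.card = k ∧ ∀ i ∈ s, i + 1 ∉ s)

lemma mem_idxSet {m k : ℕ} {s : Finset ℕ} :
    s ∈ idxSet m k ↔ s.card = k ∧ (∀ i ∈ s, i + 2 ≤ m) ∧ (∀ i ∈ s, i + 1 ∉ s) := by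
  simp only [idxSet, mem_filter, mem_powerset, Finset.subset_iff, mem_range]
  constructor
  · rintro ⟨h1, h2, h3⟩
    exact ⟨h2, fun i hi => by have := h1 hi; omega, h3⟩
  · rintro ⟨h1, h2, h3⟩
    exact ⟨fun i hi => by have := h2 _ hi; omega, h1, h3⟩

lemma Hpoly_eq (m k : ℕ) :
    Hpoly m k = ∑ s ∈ idxSet m k, (X : Polynomial ℤ) ^ (∑ i ∈ s, i) := by
  rw [Hpoly, ← finsum_mem_coe_finset]
  congr 1
  ext s
  simp [mem_idxSet]

lemma Hpoly_zero (m : ℕ) : Hpoly m 0 = 1 := by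
  rw [Hpoly_eq]
  have h : idxSet m 0 = {∅} := by
    ext s
    simp only [mem_idxSet, Finset.card_eq_zero, Finset.mem_singleton]
    constructor
    · rintro ⟨h, -, -⟩; exact h
    · rintro rfl; simp
  rw [h]; simp

lemma Hpoly_rec (m k : ℕ) :
    Hpoly (m+2) (k+1) = Hpoly (m+1) (k+1) + X ^ m * Hpoly m k := by
  rw [Hpoly_eq, Hpoly_eq, Hpoly_eq,
    ← Finset.sum_filter_add_sum_filter_not (idxSet (m+2) (k+1)) (fun s => m ∈ s), add_comm]
  congr 1
  · -- m ∉ s part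
    have h : (idxSet (m+2) (k+1)).filter (fun s => m ∉ s) = idxSet (m+1) (k+1) := by
      ext s
      simp only [mem_filter, mem_idxSet]
      constructor
      · rintro ⟨⟨h1, h2, h3⟩, h4⟩
        refine ⟨h1, fun i hi => ?_, h3⟩
        have := h2 i hi
        have : i ≠ m := fun h => h4 (h ▸ hi)
        omega
      · rintro ⟨h1, h2, h3⟩
        refine ⟨⟨h1, fun i hi => by have := h2 i hi; omega, h3⟩, fun hm => ?_⟩
        have := h2 m hm; omega
    rw [h]
  · -- m ∈ s part
    rw [Finset.mul_sum]
    refine Finset.sum_nbij' (fun s => s.erase m) (fun t => insert m t) ?_ ?_ ?_ ?_ ?_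
    · intro s hs
      simp only [mem_filter, mem_idxSet] at hs
      obtain ⟨⟨h1, h2, h3⟩, h4⟩ := hs
      refine mem_idxSet.2 ⟨?_, ?_, ?_⟩
      · rw [Finset.card_erase_of_mem h4, h1]; omega
      · intro i hi
        rw [Finset.mem_erase] at hi
        obtain ⟨hne, hi⟩ := hi
        have hb := h2 i hi
        have : i + 1 ≠ m := by
          intro h
          exact h3 i hi (h ▸ h4)
        omega
      · intro i hi
        rw [Finset.mem_erase] at hi
        intro h
        exact h3 i hi.2 (Finset.mem_of_mem_erase h)
    · intro t ht
      rw [mem_idxSet] at ht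
      obtain ⟨h1, h2, h3⟩ := ht
      have hmt : m ∉ t := fun h => by have := h2 m h; omega
      simp only [mem_filter, mem_idxSet]
      refine ⟨⟨?_, ?_, ?_⟩, Finset.mem_insert_self m t⟩
      · rw [Finset.card_insert_of_notMem hmt, h1]
      · intro i hi
        rcases Finset.mem_insert.1 hi with rfl | hi
        · omega
        · have := h2 i hi; omega
      · intro i hi h
        rcases Finset.mem_insert.1 hi with rfl | hi
        · rcases Finset.mem_insert.1 h with h | h
          · omega
          · have := h2 _ h; omega
        · rcases Finset.mem_insert.1 h with h | h
          · have := h2 i hi; omega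
          · exact h3 i hi h
    · intro s hs
      simp only [mem_filter] at hs
      exact Finset.insert_erase hs.2
    · intro t ht
      rw [mem_idxSet] at ht
      have hmt : m ∉ t := fun h => by have := ht.2.1 m h; omega
      exact Finset.erase_insert hmt
    · intro s hs
      simp only [mem_filter] at hs
      rw [← Finset.add_sum_erase _ _ hs.2, pow_add]

lemma Hpoly_eq_zero {m k : ℕ} (h : m/2 < k) : Hpoly m k = 0 := by
  rw [Hpoly_eq]
  have he : idxSet m k = ∅ := by
    rw [Finset.eq_empty_iff_forall_notMem]
    intro s hs
    rw [mem_idxSet] at hs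
    obtain ⟨hc, hb, ha⟩ := hs
    have hcard : s.card ≤ m/2 := by
      have hle := Finset.card_le_card_of_injOn (s := s) (fun i => i / 2)
        (t := Finset.range (m/2)) ?_ ?_
      · simpa using hle
      · intro i hi
        simp only [Finset.coe_range, Set.mem_Iio, mem_range]
        have := hb i hi; omega
      · intro a ha' b hb' hab
        have hab2 : a / 2 = b / 2 := hab
        by_contra hne
        simp only [Finset.mem_coe] at ha' hb'
        rcases Nat.lt_or_ge a b with h' | h'
        · have hba : b = a + 1 := by omega
          exact ha a ha' (hba ▸ hb')
        · have hab' : a = b + 1 := by omega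
          exact ha b hb' (hab' ▸ ha')
    omega
  rw [he]; simp

noncomputable def Gpoly (m : ℕ) : Polynomial (Polynomial ℤ) :=
  ∑ k ∈ Finset.range (m/2+1), Polynomial.C (Hpoly m k) * (X : Polynomial (Polynomial ℤ))^k

lemma Gpoly_ext (m N : ℕ) (h : m/2 + 1 ≤ N) :
    Gpoly m = ∑ k ∈ Finset.range N,
      Polynomial.C (Hpoly m k) * (X : Polynomial (Polynomial ℤ))^k := by
  rw [Gpoly]
  apply Finset.sum_subset (Finset.range_subset_range.2 h)
  intro k hk hk'
  simp only [mem_range] at hk hk'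
  rw [Hpoly_eq_zero (by omega), map_zero, zero_mul]

lemma Gpoly_rec (m : ℕ) :
    Gpoly (m+2) = Gpoly (m+1) + Polynomial.C (X^m) * X * Gpoly m := by
  rw [Gpoly_ext (m+2) (m/2+2) (by omega), Gpoly_ext (m+1) (m/2+2) (by omega), Gpoly,
    Finset.sum_range_succ' _ (m/2+1),
    Finset.sum_range_succ' (fun k => Polynomial.C (Hpoly (m+1) k) * (X : Polynomial (Polynomial ℤ))^k) (m/2+1),
    Hpoly_zero, Hpoly_zero, Finset.mul_sum]
  have key : ∀ k, Polynomial.C (Hpoly (m+2) (k+1)) * (X : Polynomial (Polynomial ℤ))^(k+1) =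
      Polynomial.C (Hpoly (m+1) (k+1)) * X^(k+1) +
        Polynomial.C (X^m) * X * (Polynomial.C (Hpoly m k) * X^k) := by
    intro k
    rw [Hpoly_rec, map_add, map_mul, add_mul]
    ring
  simp_rw [key, Finset.sum_add_distrib]
  ring

/-- Let `F` be the Carlitz `q`-Fibonacci polynomials: `F₀ = 0`, `F₁ = 1`,
`F_n = F_{n−1} + q^{n−3} t F_{n−2}` (so `F₂ = 1` since `F₀ = 0`). Then
`Q_{N_m}(t) = (−t)^{⌊m/2⌋} F_{m+1}(−1/t)` in `ℤ[q][t,t⁻¹]`; equivalently,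
`F_{m+1}(t) = Σ_{k=0}^{⌊m/2⌋} H_k t^k`. -/
theorem statement14 (m : ℕ) (hm : 2 ≤ m)
    (F : ℕ → Polynomial (Polynomial ℤ))
    (hF0 : F 0 = 0) (hF1 : F 1 = 1) (hF2 : F 2 = 1)
    (hFrec : ∀ k : ℕ, F (k + 3) =
      F (k + 2) + Polynomial.C (Polynomial.X ^ k) * Polynomial.X * F (k + 1)) :
    Polynomial.toLaurent (QNm m) =
      (-(LaurentPolynomial.T 1 : LaurentPolynomial (Polynomial ℤ))) ^ (m / 2) *
        Polynomial.eval₂ LaurentPolynomial.C (-(LaurentPolynomial.T (-1))) (F (m + 1)) ∧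
    F (m + 1) =
      ∑ k ∈ Finset.range (m / 2 + 1),
        Polynomial.C (Hpoly m k) * (Polynomial.X : Polynomial (Polynomial ℤ)) ^ k := by
  have FG : ∀ n, F (n+1) = Gpoly n := by
    intro n
    induction n using Nat.strong_induction_on with
    | _ n ih =>
      match n with
      | 0 => simp [Gpoly, Hpoly_zero, hF1]
      | 1 => simp [Gpoly, Hpoly_zero, hF2]
      | (n+2) =>
        rw [show n+2+1 = n+3 from rfl, hFrec n, ih (n+1) (by omega), ih n (by omega),
          Gpoly_rec]
  have h2 : F (m + 1) =
      ∑ k ∈ Finset.range (m / 2 + 1),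
        Polynomial.C (Hpoly m k) * (Polynomial.X : Polynomial (Polynomial ℤ)) ^ k := FG m
  refine ⟨?_, h2⟩
  rw [h2, QNm, map_sum, Polynomial.eval₂_finset_sum, Finset.mul_sum]
  refine Finset.sum_congr rfl fun k hk => ?_
  simp only [mem_range] at hk
  obtain ⟨d, hd⟩ : ∃ d, m/2 = k + d := ⟨m/2 - k, by omega⟩
  have hsub : m/2 - k = d := by omega
  rw [hsub, hd, map_mul, map_pow, Polynomial.toLaurent_C, Polynomial.toLaurent_X,
    Polynomial.eval₂_mul, Polynomial.eval₂_C, Polynomial.eval₂_pow, Polynomial.eval₂_X,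
    map_mul, map_pow, map_neg, map_one]
  have hT : (T 1 : LaurentPolynomial (Polynomial ℤ))^(k+d) * (T (-1))^k = (T 1)^d := by
    rw [T_pow, T_pow, T_pow, ← T_add]
    congr 1
    push_cast
    ring
  have hs : ((-1 : LaurentPolynomial (Polynomial ℤ)))^(k+d) * (-1)^k = (-1)^d := by
    rw [← pow_add, show k+d+k = d + 2*k by ring, pow_add, pow_mul]
    norm_num
  calc (-1 : LaurentPolynomial (Polynomial ℤ))^d * LaurentPolynomial.C (Hpoly m k) * (T 1)^d
      = ((-1)^d * (T 1)^d) * LaurentPolynomial.C (Hpoly m k) := by ring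
    _ = (((-1)^(k+d) * (-1)^k) * ((T 1)^(k+d) * (T (-1))^k)) *
          LaurentPolynomial.C (Hpoly m k) := by rw [hs, hT]
    _ = (-(T 1 : LaurentPolynomial (Polynomial ℤ)))^(k+d) *
          (LaurentPolynomial.C (Hpoly m k) * (-(T (-1)))^k) := by
        rw [show (-(T 1 : LaurentPolynomial (Polynomial ℤ))) = (-1) * T 1 by ring,
          show (-(T (-1) : LaurentPolynomial (Polynomial ℤ))) = (-1) * T (-1) by ring,
          mul_pow, mul_pow]
        ring
end
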